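/- arXiv:2504.11394 — 9 statements merged into one kernel-verified Lean document; each statement's English description precedes it below -/
import Mathlib

section
/- Let R be an atomic integral domain. R is a half-factorial domain (HFD) if and only if there exists a function L from the nonzero nonunits of R to the positive integers such that L(ab) = L(a) + L(b) for all nonzero nonunits a, b, and L(π) = 1 for every irreducible π of R. -/
/-- An integral domain is atomic if every nonzero nonunit is a finite product of
irreducible elements. -/
def Atomic (R : Type*) [CommRing R] [IsDomain R] : Prop :=
  ∀ a : R, a ≠ 0 → ¬IsUnit a → ∃ f : Multiset R, (∀ x ∈ f, Irreducible x) ∧ f.prod = a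

/-- A half-factorial domain: atomic, and any two factorizations of the same element
into irreducibles have the same length. -/
def IsHFD (R : Type*) [CommRing R] [IsDomain R] : Prop :=
  Atomic R ∧ ∀ f g : Multiset R, (∀ x ∈ f, Irreducible x) → (∀ x ∈ g, Irreducible x) →
    f.prod = g.prod → Multiset.card f = Multiset.card g

private lemma prod_irred_ne_zero {R : Type*} [CommRing R] [IsDomain R]
    {f : Multiset R} (hf : ∀ x ∈ f, Irreducible x) : f.prod ≠ 0 :=
  Multiset.prod_ne_zero (fun h0 => (hf 0 h0).ne_zero rfl)

private lemma prod_irred_not_unit {R : Type*} [CommRing R] [IsDomain R]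
    {f : Multiset R} (hf : ∀ x ∈ f, Irreducible x) (hne : f ≠ 0) : ¬IsUnit f.prod := by
  obtain ⟨a, ha⟩ := Multiset.exists_mem_of_ne_zero hne
  obtain ⟨s, rfl⟩ := Multiset.exists_cons_of_mem ha
  rw [Multiset.prod_cons]
  intro h
  exact (hf a (Multiset.mem_cons_self a s)).not_isUnit (isUnit_of_mul_isUnit_left h)

theorem stmt_0 (R : Type*) [CommRing R] [IsDomain R] (hR : Atomic R) :
    IsHFD R ↔ ∃ L : R → ℕ,
      (∀ a : R, a ≠ 0 → ¬IsUnit a → 0 < L a) ∧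
      (∀ a b : R, a ≠ 0 → ¬IsUnit a → b ≠ 0 → ¬IsUnit b → L (a * b) = L a + L b) ∧
      (∀ π : R, Irreducible π → L π = 1) := by
  classical
  constructor
  · rintro ⟨-, hU⟩
    refine ⟨fun a => if h : a ≠ 0 ∧ ¬IsUnit a then
      Multiset.card (hR a h.1 h.2).choose else 0, ?_, ?_, ?_⟩
    all_goals
      have key : ∀ (a : R) (f : Multiset R), (∀ x ∈ f, Irreducible x) → f.prod = a →
          ∀ (h0 : a ≠ 0) (h1 : ¬IsUnit a),
          (if h : a ≠ 0 ∧ ¬IsUnit a then Multiset.card (hR a h.1 h.2).choose else 0)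
            = Multiset.card f := by
        intro a f hf hprod h0 h1
        rw [dif_pos ⟨h0, h1⟩]
        obtain ⟨hg, hgprod⟩ := (hR a h0 h1).choose_spec
        exact hU _ f hg hf (hgprod.trans hprod.symm)
    · intro a h0 h1
      dsimp only
      obtain ⟨f, hf, hprod⟩ := hR a h0 h1
      rw [key a f hf hprod h0 h1]
      have hne : f ≠ 0 := by
        rintro rfl
        exact h1 (hprod ▸ isUnit_one)
      exact Multiset.card_pos.mpr hne
    · intro a b ha0 ha1 hb0 hb1
      dsimp only
      obtain ⟨f, hf, hfprod⟩ := hR a ha0 ha1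
      obtain ⟨g, hg, hgprod⟩ := hR b hb0 hb1
      have hab0 : a * b ≠ 0 := mul_ne_zero ha0 hb0
      have hab1 : ¬IsUnit (a * b) := fun h => ha1 (isUnit_of_mul_isUnit_left h)
      rw [key (a*b) (f+g) (by intro x hx; rcases Multiset.mem_add.mp hx with h|h
                              exacts [hf x h, hg x h])
          (by rw [Multiset.prod_add, hfprod, hgprod]) hab0 hab1,
        key a f hf hfprod ha0 ha1, key b g hg hgprod hb0 hb1, Multiset.card_add]
    · intro π hπ
      dsimp only
      rw [key π {π} (by simpa using hπ) (Multiset.prod_singleton π) hπ.ne_zero hπ.not_isUnit]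
      simp
  · rintro ⟨L, hpos, hadd, hirr⟩
    refine ⟨hR, ?_⟩
    have main : ∀ f : Multiset R, (∀ x ∈ f, Irreducible x) → f ≠ 0 →
        L f.prod = Multiset.card f := by
      intro f
      induction f using Multiset.induction with
      | empty => intro _ h; exact absurd rfl h
      | cons a s ih =>
        intro hf _
        have ha := hf a (Multiset.mem_cons_self a s)
        have hs : ∀ x ∈ s, Irreducible x := fun x hx => hf x (Multiset.mem_cons_of_mem hx)
        rcases eq_or_ne s 0 with rfl | hsne
        · simp [hirr a ha]
        · rw [Multiset.prod_cons,
            hadd a s.prod ha.ne_zero ha.not_isUnit (prod_irred_ne_zero hs)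
              (prod_irred_not_unit hs hsne), hirr a ha, ih hs hsne,
            Multiset.card_cons, add_comm]
    intro f g hf hg hfg
    rcases eq_or_ne f 0 with rfl | hfne
    · rcases eq_or_ne g 0 with rfl | hgne
      · rfl
      · exact absurd (hfg ▸ isUnit_one : IsUnit g.prod) (prod_irred_not_unit hg hgne)
    · rcases eq_or_ne g 0 with rfl | hgne
      · exact absurd (hfg ▸ isUnit_one : IsUnit f.prod) (prod_irred_not_unit hf hfne)
      · rw [← main f hf hfne, ← main g hg hgne, hfg]
end

section
/- Let R be an HFD with quotient field K and boundary map ∂_R. If x ∈ K* is almost integral over R (i.e., there exists a nonzero r ∈ R with r xⁿ ∈ R for all n ∈ ℕ), then ∂_R(x) ≥ 0. -/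
/-- `B : K → ℤ` is the boundary map of the HFD `R` with quotient field `K`:
it is additive on products of nonzero elements, vanishes on units of `R`,
and takes the value `1` on irreducibles of `R`. -/
def IsBoundaryMap (R K : Type*) [CommRing R] [IsDomain R] [Field K] [Algebra R K]
    (B : K → ℤ) : Prop :=
  (∀ x y : K, x ≠ 0 → y ≠ 0 → B (x * y) = B x + B y) ∧
  (∀ u : R, IsUnit u → B (algebraMap R K u) = 0) ∧
  (∀ π : R, Irreducible π → B (algebraMap R K π) = 1)

/-- If `x ∈ K*` is almost integral over the HFD `R`, then `∂_R(x) ≥ 0`. -/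
theorem stmt_2 (R K : Type*) [CommRing R] [IsDomain R] [Field K] [Algebra R K]
    [IsFractionRing R K] (hR : IsHFD R) (B : K → ℤ) (hB : IsBoundaryMap R K B)
    (x : K) (hx : x ≠ 0)
    (hai : ∃ r : R, r ≠ 0 ∧ ∀ n : ℕ, 0 < n →
      ∃ s : R, algebraMap R K r * x ^ n = algebraMap R K s) :
    0 ≤ B x := by
  obtain ⟨hmul, hunit, hirr⟩ := hB
  have hinj : Function.Injective (algebraMap R K) := IsFractionRing.injective R K
  have hone : B 1 = 0 := by
    have := hunit 1 isUnit_one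
    simpa using this
  -- B of products of irreducibles
  have hprod : ∀ f : Multiset R, (∀ y ∈ f, Irreducible y) →
      B (algebraMap R K f.prod) = Multiset.card f := by
    intro f
    induction f using Multiset.induction with
    | empty => intro _; simpa using hone
    | cons a s ih =>
      intro hf
      have ha : Irreducible a := hf a (Multiset.mem_cons_self a s)
      have hs : ∀ y ∈ s, Irreducible y := fun y hy => hf y (Multiset.mem_cons_of_mem hy)
      have hsne : s.prod ≠ 0 := Multiset.prod_ne_zero (fun h => (hs 0 h).ne_zero rfl)
      have hane : (algebraMap R K) a ≠ 0 := by
        simpa [map_eq_zero_iff _ hinj] using ha.ne_zero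
      have hsne' : (algebraMap R K) s.prod ≠ 0 := by
        simpa [map_eq_zero_iff _ hinj] using hsne
      rw [Multiset.prod_cons, map_mul, hmul _ _ hane hsne', hirr a ha, ih hs]
      simp [add_comm]
  -- B nonneg on nonzero elements of R
  have hnn : ∀ s : R, s ≠ 0 → 0 ≤ B (algebraMap R K s) := by
    intro s hs
    by_cases hu : IsUnit s
    · exact (hunit s hu).ge
    · obtain ⟨f, hf, hfp⟩ := hR.1 s hs hu
      rw [← hfp, hprod f hf]
      exact Int.ofNat_nonneg _
  -- B (x^n) = n * B x for n ≥ 1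
  have hpow : ∀ n : ℕ, 0 < n → B (x ^ n) = n * B x := by
    intro n hn
    induction n with
    | zero => exact absurd hn (lt_irrefl 0)
    | succ m ih =>
      rcases Nat.eq_zero_or_pos m with hm | hm
      · subst hm; simp
      · rw [pow_succ, hmul _ _ (pow_ne_zero m hx) hx, ih hm]
        push_cast; ring
  obtain ⟨r, hr, h⟩ := hai
  by_contra hneg
  push_neg at hneg
  set n : ℕ := (B (algebraMap R K r)).toNat + 1 with hn
  obtain ⟨s, hsx⟩ := h n (Nat.succ_pos _)
  have hrne : (algebraMap R K) r ≠ 0 := by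
    simpa [map_eq_zero_iff _ hinj] using hr
  have hsne' : (algebraMap R K) s ≠ 0 := by
    rw [← hsx]
    exact mul_ne_zero hrne (pow_ne_zero n hx)
  have hsne : s ≠ 0 := fun h0 => hsne' (by rw [h0, map_zero])
  have h1 : B (algebraMap R K s) = B (algebraMap R K r) + n * B x := by
    rw [← hsx, hmul _ _ hrne (pow_ne_zero n hx), hpow n (Nat.succ_pos _)]
  have h2 := hnn s hsne
  rw [h1] at h2
  have hbx : B x ≤ -1 := by omega
  have hrn : B (algebraMap R K r) + 1 ≤ (n : ℤ) := by
    have := Int.self_le_toNat (B (algebraMap R K r))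
    push_cast [hn]
    omega
  have hmn : (n : ℤ) * B x ≤ (n : ℤ) * (-1) :=
    mul_le_mul_of_nonneg_left hbx (Int.ofNat_nonneg n)
  linarith
end

section
/- Let R be an HFD with quotient field K, and let T be an overring of R (R ⊆ T ⊆ K) that is an HFD and boundary nonnegative (∂_R(t) ≥ 0 for every nonzero t ∈ T). If x ∈ T is a nonzero prime element of T, then ∂_R(x) ∈ {0, 1}. -/
/-- If `T` is a boundary-nonnegative HFD overring of the HFD `R` and `x ∈ T` is a
nonzero prime element of `T`, then `∂_R(x) ∈ {0, 1}`. -/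
theorem stmt_3 (R K : Type*) [CommRing R] [IsDomain R] [Field K] [Algebra R K]
    [IsFractionRing R K] (hR : IsHFD R) (B : K → ℤ) (hB : IsBoundaryMap R K B)
    (T : Subring K) (hRT : ∀ r : R, algebraMap R K r ∈ T)
    (hT : IsHFD T) (hnn : ∀ t : K, t ∈ T → t ≠ 0 → 0 ≤ B t)
    (x : T) (hx : x ≠ 0) (hp : Prime x) :
    B (x : K) = 0 ∨ B (x : K) = 1 := by
  have hinj : Function.Injective (algebraMap R K) := IsFractionRing.injective R K
  have hxK : (x : K) ≠ 0 := by
    simpa using Subtype.coe_injective.ne hx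
  have hBx : 0 ≤ B (x : K) := hnn _ x.2 hxK
  -- write x = a / s
  obtain ⟨a, s, hs, hdiv⟩ := IsFractionRing.div_surjective (A := R) (x : K)
  have hs0 : s ≠ 0 := nonZeroDivisors.ne_zero hs
  have hsK : algebraMap R K s ≠ 0 := by
    simpa using hinj.ne hs0
  have hBs : 0 ≤ B (algebraMap R K s) := hnn _ (hRT s) hsK
  have heq : algebraMap R K a = algebraMap R K s * (x : K) := by
    field_simp at hdiv ⊢
    linear_combination hdiv
  have ha0 : a ≠ 0 := by
    intro h; rw [h, map_zero] at heq
    exact hxK (by simpa [hsK] using heq.symm)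
  have haK : algebraMap R K a ≠ 0 := by simpa using hinj.ne ha0
  have hBa : B (algebraMap R K a) = B (algebraMap R K s) + B (x : K) := by
    rw [heq, hB.1 _ _ hsK hxK]
  by_cases hu : IsUnit a
  · left
    have := hB.2.1 a hu
    omega
  · -- factor a into irreducibles
    obtain ⟨f, hfirr, hfprod⟩ := hR.1 a ha0 hu
    -- map into T
    set φ : R →+* T := (algebraMap R K).codRestrict T hRT with hφ
    have hdvd : x ∣ (f.map φ).prod := by
      rw [Multiset.prod_hom f φ, hfprod]
      refine ⟨⟨algebraMap R K s, hRT s⟩, ?_⟩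
      ext
      simpa [φ, mul_comm] using heq
    obtain ⟨y, hy, hxy⟩ := hp.exists_mem_multiset_dvd hdvd
    obtain ⟨π, hπf, rfl⟩ := Multiset.mem_map.1 hy
    obtain ⟨t, ht⟩ := hxy
    have hπirr := hfirr π hπf
    have hπK : (φ π : K) ≠ 0 := by
      simpa [φ] using hinj.ne hπirr.ne_zero
    have htK : (t : K) ≠ 0 := by
      intro h0
      apply hπK
      have : (φ π : K) = (x : K) * (t : K) := by exact_mod_cast congrArg Subtype.val ht
      rw [this, h0, mul_zero]
    have hBt : 0 ≤ B (t : K) := hnn _ t.2 htK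
    have h1 : B (algebraMap R K π) = 1 := hB.2.2 π hπirr
    have hsplit : B (algebraMap R K π) = B (x : K) + B (t : K) := by
      have h2 : (φ π : K) = (x : K) * (t : K) := by
        exact_mod_cast congrArg Subtype.val ht
      have : (algebraMap R K π) = (x : K) * (t : K) := h2
      rw [this, hB.1 _ _ hxK htK]
    omega
end

section
/- Let R be an HFD with quotient field K, and let T be an HFD overring of R that is boundary nonnegative and almost integral over R (every element of T is almost integral over R). If x ∈ T is irreducible in T, then ∂_R(x) ∈ {0, 1}. -/
/-- If `T` is a boundary-nonnegative HFD overring of the HFD `R` that is almost integral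
over `R`, and `x ∈ T` is irreducible in `T`, then `∂_R(x) ∈ {0, 1}`. -/
theorem stmt_4 (R K : Type*) [CommRing R] [IsDomain R] [Field K] [Algebra R K]
    [IsFractionRing R K] (hR : IsHFD R) (B : K → ℤ) (hB : IsBoundaryMap R K B)
    (T : Subring K) (hRT : ∀ r : R, algebraMap R K r ∈ T)
    (hT : IsHFD T) (hnn : ∀ t : K, t ∈ T → t ≠ 0 → 0 ≤ B t)
    (hai : ∀ t : T, ∃ r : R, r ≠ 0 ∧ ∀ n : ℕ, 0 < n →
      ∃ s : R, algebraMap R K r * (t : K) ^ n = algebraMap R K s)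
    (x : T) (hx : Irreducible x) :
    B (x : K) = 0 ∨ B (x : K) = 1 := by
  obtain ⟨hBmul, hBunit, hBirr⟩ := hB
  have hinj : Function.Injective (algebraMap R K) := IsFractionRing.injective R K
  have hmapne : ∀ a : R, a ≠ 0 → algebraMap R K a ≠ 0 := by
    intro a ha h
    exact ha (hinj (by simpa using h))
  have h1 : B 1 = 0 := by
    have := hBmul 1 1 one_ne_zero one_ne_zero
    simp only [mul_one] at this
    linarith
  -- units of T have boundary 0
  have hTunit : ∀ t : T, IsUnit t → B (t : K) = 0 := by
    intro t ht
    obtain ⟨u, rfl⟩ := ht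
    have hmul : ((u : T) : K) * (((u⁻¹ : Tˣ) : T) : K) = 1 := by
      have : ((u : T) * ((u⁻¹ : Tˣ) : T) : T) = 1 := by
        simp [Units.mul_inv]
      exact_mod_cast congrArg (Subtype.val) this
    have hu0 : ((u : T) : K) ≠ 0 := left_ne_zero_of_mul_eq_one hmul
    have hv0 : (((u⁻¹ : Tˣ) : T) : K) ≠ 0 := right_ne_zero_of_mul_eq_one hmul
    have h2 := hBmul _ _ hu0 hv0
    rw [hmul, h1] at h2
    have h3 : 0 ≤ B ((u : T) : K) := hnn _ (u : T).2 hu0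
    have h4 : 0 ≤ B (((u⁻¹ : Tˣ) : T) : K) := hnn _ ((u⁻¹ : Tˣ) : T).2 hv0
    linarith
  -- B on powers
  have hpow : ∀ (n : ℕ) (y : K), y ≠ 0 → B (y ^ n) = n * B y := by
    intro n y hy
    induction n with
    | zero => simpa using h1
    | succ k ih =>
        rw [pow_succ, hBmul _ _ (pow_ne_zero _ hy) hy, ih]
        push_cast
        ring
  -- boundary of a product of irreducibles of R equals its length
  have hfact : ∀ f : Multiset R, (∀ π ∈ f, Irreducible π) →
      B (algebraMap R K f.prod) = Multiset.card f := by
    intro f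
    induction f using Multiset.induction_on with
    | empty => intro _; simpa using h1
    | cons a f ih =>
        intro hirr
        have ha : Irreducible a := hirr a (Multiset.mem_cons_self a f)
        have hf : ∀ π ∈ f, Irreducible π := fun π hπ => hirr π (Multiset.mem_cons_of_mem hπ)
        have hfne : f.prod ≠ 0 := Multiset.prod_ne_zero (by
          intro h0
          exact (hf 0 h0).ne_zero rfl)
        rw [Multiset.prod_cons, map_mul,
          hBmul _ _ (hmapne a ha.ne_zero) (hmapne _ hfne), hBirr a ha, ih hf]
        simp
        ring
  -- images of R-irreducibles in T factor into at least one atom each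
  have hTfact : ∀ f : Multiset R, (∀ π ∈ f, Irreducible π) →
      ∃ G : Multiset T, (∀ t ∈ G, Irreducible t) ∧
        ((G.prod : T) : K) = algebraMap R K f.prod ∧ Multiset.card f ≤ Multiset.card G := by
    intro f
    induction f using Multiset.induction_on with
    | empty => intro _; exact ⟨0, by simp, by simp, by simp⟩
    | cons a f ih =>
        intro hirr
        have ha : Irreducible a := hirr a (Multiset.mem_cons_self a f)
        obtain ⟨G, hGirr, hGprod, hGcard⟩ := ih (fun π hπ => hirr π (Multiset.mem_cons_of_mem hπ))
        set aT : T := ⟨algebraMap R K a, hRT a⟩ with haT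
        have haT0 : aT ≠ 0 := by
          intro h
          exact hmapne a ha.ne_zero (congrArg Subtype.val h)
        have haTnu : ¬IsUnit aT := by
          intro h
          have := hTunit aT h
          rw [show (aT : K) = algebraMap R K a from rfl, hBirr a ha] at this
          exact one_ne_zero this
        obtain ⟨g, hgirr, hgprod⟩ := hT.1 aT haT0 haTnu
        have hg1 : 1 ≤ Multiset.card g := by
          rcases Multiset.empty_or_exists_mem g with h0 | ⟨y, hy⟩
          · exfalso; apply haTnu; rw [← hgprod, h0]; simp
          · exact Multiset.card_pos.mpr (by intro h0; rw [h0] at hy; simp at hy)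
        refine ⟨g + G, ?_, ?_, ?_⟩
        · intro t ht
          rcases Multiset.mem_add.mp ht with h | h
          · exact hgirr t h
          · exact hGirr t h
        · have hpr : (g + G).prod = aT * G.prod := by rw [Multiset.prod_add, hgprod]
          rw [hpr, Multiset.prod_cons, map_mul, ← hGprod]
          rfl
        · simp only [Multiset.card_add, Multiset.card_cons]
          omega
  -- main argument
  have hx0 : (x : K) ≠ 0 := by
    intro h
    exact hx.ne_zero (Subtype.ext h)
  by_contra hcon
  push_neg at hcon
  have hBx : 2 ≤ B (x : K) := by
    have := hnn _ x.2 hx0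
    omega
  obtain ⟨r, hr0, hs⟩ := hai x
  have hrK : algebraMap R K r ≠ 0 := hmapne r hr0
  set rT : T := ⟨algebraMap R K r, hRT r⟩ with hrT
  set rx : T := rT * x with hrx
  have hrx0 : rx ≠ 0 := by
    intro h
    have : ((rx : T) : K) = 0 := congrArg Subtype.val h
    rw [hrx] at this
    push_cast at this
    exact (mul_ne_zero hrK hx0) this
  have hrxnu : ¬IsUnit rx := fun h => hx.not_isUnit (isUnit_of_mul_isUnit_right h)
  obtain ⟨h, hhirr, hhprod⟩ := hT.1 rx hrx0 hrxnu
  set c : ℕ := Multiset.card h with hc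
  have hc1 : 1 ≤ c := by
    rcases Multiset.empty_or_exists_mem h with h0 | ⟨y, hy⟩
    · exfalso; apply hrxnu; rw [← hhprod, h0]; simp
    · exact Multiset.card_pos.mpr (by intro h0; rw [h0] at hy; simp at hy)
  obtain ⟨s, hseq⟩ := hs c hc1
  have hsK : algebraMap R K s ≠ 0 := by
    rw [← hseq]
    exact mul_ne_zero hrK (pow_ne_zero _ hx0)
  have hBs : B (algebraMap R K s) = B (algebraMap R K r) + c * B (x : K) := by
    rw [← hseq, hBmul _ _ hrK (pow_ne_zero _ hx0), hpow c _ hx0]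
  have hBr : 0 ≤ B (algebraMap R K r) := hnn _ (hRT r) hrK
  have hBs2 : 2 * (c : ℤ) ≤ B (algebraMap R K s) := by
    have : (c : ℤ) * 2 ≤ c * B (x : K) := by
      apply mul_le_mul_of_nonneg_left hBx
      positivity
    linarith
  have hs0 : s ≠ 0 := by
    intro h0
    apply hsK
    rw [h0, map_zero]
  have hsnu : ¬IsUnit s := by
    intro hu
    have := hBunit s hu
    omega
  obtain ⟨f, hfirr, hfprod⟩ := hR.1 s hs0 hsnu
  have hm : B (algebraMap R K s) = Multiset.card f := by
    rw [← hfprod]; exact hfact f hfirr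
  obtain ⟨G, hGirr, hGprod, hGcard⟩ := hTfact f hfirr
  -- G.prod = rx * x^(c-1)
  have hGeq : G.prod = rx * x ^ (c - 1) := by
    apply Subtype.ext
    rw [hGprod, hfprod, ← hseq]
    push_cast [hrx]
    rw [mul_assoc, ← pow_succ']
    congr 2
    omega
  -- second factorization of the same element
  have hsecond : (h + Multiset.replicate (c - 1) x).prod = rx * x ^ (c - 1) := by
    rw [Multiset.prod_add, hhprod, Multiset.prod_replicate]
  have hcards := hT.2 G (h + Multiset.replicate (c - 1) x) hGirr
    (by
      intro t ht
      rcases Multiset.mem_add.mp ht with h' | h'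
      · exact hhirr t h'
      · rw [Multiset.eq_of_mem_replicate h']; exact hx)
    (by rw [hGeq, hsecond])
  rw [Multiset.card_add, Multiset.card_replicate, ← hc] at hcards
  omega
end

section
/- Let R be an HFD with quotient field K, and let T be a boundary nonnegative HFD overring of R that is almost integral over R. If x ∈ T is a prime element of T and x is a product in T of prime elements each of boundary 1, and T is a UFD, then x is associated in T to an element of R; more generally, every element of T that is a product of boundary-1 primes of T is associated by a unit of T to an element of R. -/
/-- Additivity of a "valuation-like" function over multiset products. -/
theorem sum_val_aux {A : Type*} [CommMonoidWithZero A] [NoZeroDivisors A] [Nontrivial A]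
    (w : A → ℕ) (h1 : w 1 = 0)
    (hmul : ∀ x y : A, x ≠ 0 → y ≠ 0 → w (x * y) = w x + w y) :
    ∀ M : Multiset A, (∀ y ∈ M, y ≠ 0) → w M.prod = (M.map w).sum := by
  intro M
  induction M using Multiset.induction_on with
  | empty => intro _; simpa using h1
  | cons a s ih =>
    intro h
    have ha : a ≠ 0 := h a (Multiset.mem_cons_self a s)
    have hs : ∀ y ∈ s, y ≠ 0 := fun y hy => h y (Multiset.mem_cons_of_mem hy)
    have hsp : s.prod ≠ 0 := Multiset.prod_ne_zero (fun h0 => hs 0 h0 rfl)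
    rw [Multiset.prod_cons, hmul a s.prod ha hsp, Multiset.map_cons, Multiset.sum_cons, ih hs]

open UniqueFactorizationMonoid in
/-- The key lemma: a prime of `T` of boundary `1` is associated, in `T`,
to (the image of) an element of `R`. -/
theorem key_assoc_lemma (R K : Type*) [CommRing R] [IsDomain R] [Field K] [Algebra R K]
    [IsFractionRing R K] (hR : IsHFD R) (B : K → ℤ) (hB : IsBoundaryMap R K B)
    (T : Subring K) (hRT : ∀ r : R, algebraMap R K r ∈ T)
    (hT : UniqueFactorizationMonoid T)
    (hnn : ∀ t : K, t ∈ T → t ≠ 0 → 0 ≤ B t)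
    (hai : ∀ t : T, ∃ r : R, r ≠ 0 ∧ ∀ n : ℕ, 0 < n →
      ∃ s : R, algebraMap R K r * (t : K) ^ n = algebraMap R K s)
    (p : T) (hp : Prime p) (hBp : B ((p : T) : K) = 1) :
    ∃ (u : Tˣ) (r : R), ((u : T) : K) * ((p : T) : K) = algebraMap R K r := by
  classical
  haveI : UniqueFactorizationMonoid T := hT
  letI : StrongNormalizationMonoid T := UniqueFactorizationMonoid.normalizationMonoid
  -- basic setup
  have injR : Function.Injective (algebraMap R K) := IsFractionRing.injective R K
  set toT : R →+* T := (algebraMap R K).codRestrict T hRT with htoT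
  have coe_toT : ∀ r : R, ((toT r : T) : K) = algebraMap R K r := fun r => rfl
  have toT_ne : ∀ r : R, r ≠ 0 → (toT r : T) ≠ 0 := by
    intro r hr h0
    apply hr
    apply injR
    rw [← coe_toT r, h0]
    simp
  -- boundary map basic facts
  have hB1 : B 1 = 0 := by
    have := hB.1 1 1 one_ne_zero one_ne_zero
    rw [mul_one] at this
    linarith
  have hBpow : ∀ y : K, y ≠ 0 → ∀ n : ℕ, B (y ^ n) = n * B y := by
    intro y hy n
    induction n with
    | zero => simpa using hB1
    | succ n ih =>
      rw [pow_succ, hB.1 _ _ (pow_ne_zero n hy) hy, ih]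
      push_cast; ring
  have hpne : p ≠ 0 := hp.ne_zero
  have hpK : ((p : T) : K) ≠ 0 := fun h => hpne (ZeroMemClass.coe_eq_zero.mp h)
  have hTnn : ∀ z : T, z ≠ 0 → 0 ≤ B ((z : T) : K) := by
    intro z hz
    exact hnn _ z.2 (fun h => hz (ZeroMemClass.coe_eq_zero.mp h))
  -- the two additive valuations on T
  set v : T → ℕ := fun x => (normalizedFactors x).count (normalize p) with hv
  set V : T → ℕ := fun x => Multiset.card (normalizedFactors x) with hV
  have hvmul : ∀ x y : T, x ≠ 0 → y ≠ 0 → v (x * y) = v x + v y := by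
    intro x y hx hy
    simp [hv, normalizedFactors_mul hx hy]
  have hVmul : ∀ x y : T, x ≠ 0 → y ≠ 0 → V (x * y) = V x + V y := by
    intro x y hx hy
    simp [hV, normalizedFactors_mul hx hy]
  have hv1 : v 1 = 0 := by simp [hv, normalizedFactors_one]
  have hV1 : V 1 = 0 := by simp [hV, normalizedFactors_one]
  have hvp : v p = 1 := by
    simp [hv, normalizedFactors_irreducible hp.irreducible]
  have hVp : V p = 1 := by
    simp [hV, normalizedFactors_irreducible hp.irreducible]
  have hvpow : ∀ n : ℕ, v (p ^ n) = n := by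
    intro n
    simp [hv, normalizedFactors_pow, normalizedFactors_irreducible hp.irreducible]
  have hVpow : ∀ n : ℕ, V (p ^ n) = n := by
    intro n
    simp [hV, normalizedFactors_pow, normalizedFactors_irreducible hp.irreducible]
  -- p ^ (v x) divides x
  have hpdvd : ∀ x : T, x ≠ 0 → p ^ (v x) ∣ x := by
    intro x hx
    have h1 : Multiset.replicate (v x) (normalize p) ≤ normalizedFactors x :=
      Multiset.le_count_iff_replicate_le.mp le_rfl
    have h2 : (normalize p) ^ (v x) ∣ (normalizedFactors x).prod := by
      rw [← Multiset.prod_replicate]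
      exact Multiset.prod_dvd_prod_of_le h1
    have h3 : (normalizedFactors x).prod ∣ x := (prod_normalizedFactors hx).dvd
    exact dvd_trans ((associated_normalize p).pow_pow.dvd) (dvd_trans h2 h3)
  -- nonunits have positive V
  have hVpos : ∀ x : T, x ≠ 0 → ¬IsUnit x → 1 ≤ V x := by
    intro x hx hux
    by_contra h
    have h0 : Multiset.card (normalizedFactors x) = 0 := by
      simp only [hV] at h; omega
    have := prod_normalizedFactors hx
    rw [Multiset.card_eq_zero.mp h0, Multiset.prod_zero] at this
    exact hux (associated_one_iff_isUnit.mp this.symm)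
  -- almost integrality of p
  obtain ⟨r₀, hr₀ne, hS⟩ := hai p
  set r0T : T := toT r₀ with hr0T
  have hr0Tne : r0T ≠ 0 := toT_ne r₀ hr₀ne
  have hr0K : algebraMap R K r₀ ≠ 0 := fun h => hr₀ne (injR (by simpa using h))
  set N : ℕ := V r0T with hN
  set n : ℕ := N + 1 with hn
  obtain ⟨s, hseq⟩ := hS n (by omega)
  -- s ∈ R with toT s = r0T * p ^ n
  have hsKne : algebraMap R K s ≠ 0 := by
    rw [← hseq]
    exact mul_ne_zero hr0K (pow_ne_zero n hpK)
  have hsne : s ≠ 0 := fun h => hsKne (by rw [h]; simp)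
  have heqT : toT s = r0T * p ^ n := by
    apply Subtype.ext
    push_cast [coe_toT]
    rw [← hseq, coe_toT]
  -- boundary of s
  have hBs : B (algebraMap R K s) = B (algebraMap R K r₀) + n := by
    rw [← hseq, hB.1 _ _ hr0K (pow_ne_zero n hpK), hBpow _ hpK, hBp]
    push_cast; ring
  have hBr0 : 0 ≤ B (algebraMap R K r₀) := hnn _ (hRT r₀) hr0K
  have hs_nonunit : ¬IsUnit s := by
    intro h
    have := hB.2.1 s h
    omega
  -- factor s in R
  obtain ⟨f, hfirr, hfprod⟩ := hR.1 s hsne hs_nonunit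
  have hfne0 : ∀ π ∈ f, π ≠ 0 := fun π h => (hfirr π h).ne_zero
  set F : Multiset T := f.map toT with hF
  have hFprod : F.prod = r0T * p ^ n := by
    rw [hF, ← map_multiset_prod, hfprod, heqT]
  have hFne0 : ∀ y ∈ F, y ≠ 0 := by
    intro y hy
    obtain ⟨π, hπ, rfl⟩ := Multiset.mem_map.mp hy
    exact toT_ne π (hfne0 π hπ)
  -- v of images of irreducibles is at most 1
  have hv_le1 : ∀ π ∈ f, v (toT π) ≤ 1 := by
    intro π hπ
    have hπne : (toT π : T) ≠ 0 := toT_ne π (hfne0 π hπ)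
    obtain ⟨k, hk⟩ : ∃ k, k = v (toT π) := ⟨v (toT π), rfl⟩
    rw [← hk]
    obtain ⟨z, hz⟩ : (p : T) ^ k ∣ toT π := hk ▸ hpdvd (toT π) hπne
    have hzne : z ≠ 0 := by
      intro h; rw [h, mul_zero] at hz; exact hπne hz
    have hzK : ((z : T) : K) ≠ 0 := fun h => hzne (ZeroMemClass.coe_eq_zero.mp h)
    have hBπ : B ((toT π : T) : K) = 1 := by
      rw [coe_toT]; exact hB.2.2 π (hfirr π hπ)
    have hcoe : ((toT π : T) : K) = ((p : T) : K) ^ k * ((z : T) : K) := by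
      rw [hz]; push_cast; ring
    have hBz : 0 ≤ B ((z : T) : K) := hTnn z hzne
    have hcomb : B ((toT π : T) : K) = (k : ℤ) * B ((p : T) : K) + B ((z : T) : K) := by
      rw [hcoe, hB.1 _ _ (pow_ne_zero _ hpK) hzK, hBpow _ hpK]
    rw [hBπ, hBp] at hcomb
    omega
  -- the contradiction hypothesis
  by_contra hcon
  have hnowit : ∀ π ∈ f, ∀ w : T, toT π = p * w → ¬IsUnit w := by
    intro π hπ w hw huw
    apply hcon
    refine ⟨huw.unit, π, ?_⟩
    have : ((huw.unit : T) : K) = ((w : T) : K) := rfl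
    rw [this, ← coe_toT π, hw]
    push_cast; ring
  -- the filtered multiset of irreducibles divisible by p
  set g : Multiset R := f.filter (fun π => p ∣ toT π) with hg
  have hgle : g ≤ f := Multiset.filter_le _ f
  -- v-count: card g ≥ v r0T + n
  have hsumv : v F.prod = (F.map v).sum :=
    sum_val_aux v hv1 hvmul F hFne0
  have hvF : (F.map v).sum = v r0T + n := by
    rw [← hsumv, hFprod, hvmul _ _ hr0Tne (pow_ne_zero n hpne), hvpow]
  have hsplit : f.filter (fun π => p ∣ toT π) + f.filter (fun π => ¬ p ∣ toT π) = f :=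
    Multiset.filter_add_not _ f
  have hFv_eq : (F.map v).sum = ((g.map (fun π => v (toT π))).sum +
      ((f.filter (fun π => ¬ p ∣ toT π)).map (fun π => v (toT π))).sum) := by
    have h1 : F.map v = f.map (fun π => v (toT π)) := by
      rw [hF, Multiset.map_map]; rfl
    have h2 : f.map (fun π => v (toT π)) = g.map (fun π => v (toT π)) +
        (f.filter (fun π => ¬ p ∣ toT π)).map (fun π => v (toT π)) := by
      rw [← Multiset.map_add, hg, hsplit]
    rw [h1, h2, Multiset.sum_add]
  have hnotdvd0 : ((f.filter (fun π => ¬ p ∣ toT π)).map (fun π => v (toT π))).sum = 0 := by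
    apply Multiset.sum_eq_zero
    intro a ha
    obtain ⟨π, hπ, rfl⟩ := Multiset.mem_map.mp ha
    have hπ2 := Multiset.mem_filter.mp hπ
    by_contra h
    apply hπ2.2
    have h1 : p ∣ p ^ (v (toT π)) := dvd_pow_self p (by omega)
    exact dvd_trans h1 (hpdvd (toT π) (toT_ne π (hfne0 π hπ2.1)))
  have hgsum_le : (g.map (fun π => v (toT π))).sum ≤ Multiset.card g := by
    have := Multiset.sum_le_card_nsmul (g.map (fun π => v (toT π))) 1 (by
      intro x hx
      obtain ⟨π, hπ, rfl⟩ := Multiset.mem_map.mp hx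
      exact hv_le1 π (Multiset.mem_of_le hgle hπ))
    simpa using this
  have hcardg : v r0T + n ≤ Multiset.card g := by
    rw [← hvF, hFv_eq, hnotdvd0, add_zero] at *
    omega
  -- V-count: every element of g contributes at least 2
  have hgV_ge : ∀ π ∈ g, 2 ≤ V (toT π) := by
    intro π hπ
    have hπf : π ∈ f := Multiset.mem_of_le hgle hπ
    have hπdvd : p ∣ toT π := (Multiset.mem_filter.mp hπ).2
    obtain ⟨w, hw⟩ := hπdvd
    have hπne : (toT π : T) ≠ 0 := toT_ne π (hfne0 π hπf)
    have hwne : w ≠ 0 := by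
      intro h; rw [h, mul_zero] at hw; exact hπne hw
    have hwnu : ¬IsUnit w := hnowit π hπf w hw
    rw [hw, hVmul _ _ hpne hwne, hVp]
    have := hVpos w hwne hwnu
    omega
  have hsumV : V F.prod = (F.map V).sum :=
    sum_val_aux V hV1 hVmul F hFne0
  have hVF : (F.map V).sum = N + n := by
    rw [← hsumV, hFprod, hVmul _ _ hr0Tne (pow_ne_zero n hpne), hVpow, hN]
  -- sum over g is at most sum over f
  have hgf_le : ((g.map (fun π => V (toT π))).sum ≤ (F.map V).sum) := by
    have h1 : g.map (fun π => V (toT π)) ≤ f.map (fun π => V (toT π)) :=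
      Multiset.map_le_map hgle
    have h2 : F.map V = f.map (fun π => V (toT π)) := by
      rw [hF, Multiset.map_map]; rfl
    rw [h2]
    obtain ⟨d, hd⟩ := Multiset.le_iff_exists_add.mp h1
    rw [hd, Multiset.sum_add]
    omega
  have hgV_sum : 2 * Multiset.card g ≤ (g.map (fun π => V (toT π))).sum := by
    have := Multiset.card_nsmul_le_sum (s := g.map (fun π => V (toT π))) (a := 2) (by
      intro x hx
      obtain ⟨π, hπ, rfl⟩ := Multiset.mem_map.mp hx
      exact hgV_ge π hπ)
    simpa [mul_comm] using this
  -- final contradiction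
  have : 2 * Multiset.card g ≤ N + n := by
    calc 2 * Multiset.card g ≤ (g.map (fun π => V (toT π))).sum := hgV_sum
    _ ≤ (F.map V).sum := hgf_le
    _ = N + n := hVF
  omega

/-- If `T` is a boundary-nonnegative UFD overring of the HFD `R` that is almost integral
over `R`, then every element of `T` that is a product of boundary-1 primes of `T`
is associated, by a unit of `T`, to an element of `R`. -/
theorem stmt_5 (R K : Type*) [CommRing R] [IsDomain R] [Field K] [Algebra R K]
    [IsFractionRing R K] (hR : IsHFD R) (B : K → ℤ) (hB : IsBoundaryMap R K B)
    (T : Subring K) (hRT : ∀ r : R, algebraMap R K r ∈ T)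
    (hT : UniqueFactorizationMonoid T)
    (hnn : ∀ t : K, t ∈ T → t ≠ 0 → 0 ≤ B t)
    (hai : ∀ t : T, ∃ r : R, r ≠ 0 ∧ ∀ n : ℕ, 0 < n →
      ∃ s : R, algebraMap R K r * (t : K) ^ n = algebraMap R K s)
    (x : T) (hx : ∃ f : Multiset T, (∀ p ∈ f, Prime p ∧ B ((p : T) : K) = 1) ∧ f.prod = x) :
    ∃ (u : Tˣ) (r : R), ((u : T) : K) * (x : K) = algebraMap R K r := by
  obtain ⟨f, hf, rfl⟩ := hx
  induction f using Multiset.induction_on with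
  | empty =>
    refine ⟨1, 1, ?_⟩
    simp
  | cons p s ih =>
    have hps := hf p (Multiset.mem_cons_self p s)
    obtain ⟨u₁, r₁, h₁⟩ := key_assoc_lemma R K hR B hB T hRT hT hnn hai p hps.1 hps.2
    obtain ⟨u₂, r₂, h₂⟩ := ih (fun q hq => hf q (Multiset.mem_cons_of_mem hq))
    refine ⟨u₁ * u₂, r₁ * r₂, ?_⟩
    have hkey : (((u₁ * u₂ : Tˣ) : T) : K) * (((p ::ₘ s).prod : T) : K) =
        (((u₁ : T) : K) * ((p : T) : K)) * (((u₂ : T) : K) * ((s.prod : T) : K)) := by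
      rw [Multiset.prod_cons]
      push_cast
      ring
    rw [hkey, h₁, h₂, map_mul]
end

section
/- Let R be an HFD order in a ring of algebraic integers D with conductor I = (R : D). If π ∈ D is irreducible in D and the ideal πD is comaximal with I, then ∂_R(π) > 0. Consequently, the set of irreducible elements of D of boundary 0, up to associates, is finite. -/
open NumberField

variable (K : Type*) [Field K] [NumberField K]

/-- `R` is an order in the ring of integers `𝓞 K`: a subring of finite additive index,
i.e. every element of `𝓞 K` is carried into `R` by a nonzero rational integer. -/
def IsOrder (R : Subring (𝓞 K)) : Prop :=
  ∀ x : 𝓞 K, ∃ m : ℤ, m ≠ 0 ∧ (m : 𝓞 K) * x ∈ R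

/-- `B : K → ℤ` is the boundary map of the order `R ⊆ 𝓞 K`: additive on products of
nonzero elements of `K`, zero on units of `R`, and `1` on irreducibles of `R`. -/
def BoundaryMap (R : Subring (𝓞 K)) (B : K → ℤ) : Prop :=
  (∀ x y : K, x ≠ 0 → y ≠ 0 → B (x * y) = B x + B y) ∧
  (∀ u : R, IsUnit u → B (algebraMap (𝓞 K) K (u : 𝓞 K)) = 0) ∧
  (∀ π : R, Irreducible π → B (algebraMap (𝓞 K) K (π : 𝓞 K)) = 1)

/-- The conductor `(R : 𝓞 K)` of the order `R`, as an ideal of `𝓞 K`. -/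
def conductorIdeal (R : Subring (𝓞 K)) : Ideal (𝓞 K) where
  carrier := {x : 𝓞 K | ∀ d : 𝓞 K, x * d ∈ R}
  add_mem' := by
    intro a b ha hb d
    simpa [add_mul] using R.add_mem (ha d) (hb d)
  zero_mem' := by
    intro d
    simpa using R.zero_mem
  smul_mem' := by
    intro c x hx d
    simpa [smul_eq_mul, mul_assoc, mul_comm, mul_left_comm] using hx (c * d)

set_option linter.unusedSectionVars false

open scoped nonZeroDivisors

section BoundaryHelpers

variable {K}
variable {R : Subring (𝓞 K)} {B : K → ℤ}

noncomputable def bImg (B : K → ℤ) (x : 𝓞 K) : ℤ := B (algebraMap (𝓞 K) K x)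

lemma bImg_mul (hB : BoundaryMap K R B) {x y : 𝓞 K} (hx : x ≠ 0) (hy : y ≠ 0) :
    bImg B (x * y) = bImg B x + bImg B y := by
  unfold bImg
  rw [map_mul]
  exact hB.1 _ _ ((map_ne_zero_iff _ (IsFractionRing.injective (𝓞 K) K)).2 hx)
    ((map_ne_zero_iff _ (IsFractionRing.injective (𝓞 K) K)).2 hy)

lemma bImg_one (hB : BoundaryMap K R B) : bImg B 1 = 0 := by
  have := hB.1 1 1 one_ne_zero one_ne_zero
  simp only [mul_one] at this
  unfold bImg; rw [map_one]
  omega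

lemma bImg_pow (hB : BoundaryMap K R B) {x : 𝓞 K} (hx : x ≠ 0) (n : ℕ) :
    bImg B (x ^ n) = n * bImg B x := by
  induction n with
  | zero => simpa using bImg_one hB
  | succ n ih =>
      rw [pow_succ, bImg_mul hB (pow_ne_zero _ hx) hx, ih]; push_cast; ring

lemma bImg_prod (hB : BoundaryMap K R B) (f : Multiset R) (hf : ∀ x ∈ f, Irreducible x) :
    ((f.prod : R) : 𝓞 K) ≠ 0 ∧ bImg B ((f.prod : R) : 𝓞 K) = Multiset.card f := by
  induction f using Multiset.induction_on with
  | empty => simpa using bImg_one hB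
  | cons a s ih =>
      have ha : Irreducible a := hf a (Multiset.mem_cons_self a s)
      have hs := ih (fun x hx => hf x (Multiset.mem_cons_of_mem hx))
      have ha0 : (a : 𝓞 K) ≠ 0 := fun h => ha.ne_zero (Subtype.ext h)
      have hc : (((a ::ₘ s).prod : R) : 𝓞 K) = (a : 𝓞 K) * ((s.prod : R) : 𝓞 K) := by
        rw [Multiset.prod_cons]; rfl
      constructor
      · rw [hc]; exact mul_ne_zero ha0 hs.1
      · rw [hc, bImg_mul hB ha0 hs.1, hs.2]
        have h1 : bImg B (a : 𝓞 K) = 1 := hB.2.2 a ha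
        rw [h1]
        simp [add_comm]

lemma bImg_nonneg_of_mem (hB : BoundaryMap K R B) (hR : IsHFD R) {x : 𝓞 K} (hx : x ≠ 0)
    (hxR : x ∈ R) : 0 ≤ bImg B x := by
  by_cases hu : IsUnit (⟨x, hxR⟩ : R)
  · exact le_of_eq (hB.2.1 _ hu).symm
  · obtain ⟨f, hf, hprod⟩ := hR.1 ⟨x, hxR⟩ (fun h => hx (by simpa using congrArg Subtype.val h)) hu
    have h2 := bImg_prod hB f hf
    rw [hprod] at h2
    rw [show x = ((⟨x, hxR⟩ : R) : 𝓞 K) from rfl, h2.2]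
    positivity


lemma mem_conductorIdeal {R : Subring (𝓞 K)} {x : 𝓞 K} :
    x ∈ conductorIdeal K R ↔ ∀ d : 𝓞 K, x * d ∈ R := Iff.rfl

lemma exists_conductor_elt {R : Subring (𝓞 K)} (hord : IsOrder K R) :
    ∃ m : 𝓞 K, m ≠ 0 ∧ m ∈ conductorIdeal K R := by
  classical
  set b := Module.Free.chooseBasis ℤ (𝓞 K) with hb
  choose c h1 h2 using fun i => hord (b i)
  refine ⟨((∏ i, c i : ℤ) : 𝓞 K), ?_, ?_⟩
  · exact_mod_cast Int.cast_ne_zero.mpr (Finset.prod_ne_zero_iff.mpr fun i _ => h1 i)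
  · rw [mem_conductorIdeal]
    intro d
    have hd := Module.Basis.sum_repr b d
    rw [← hd, Finset.mul_sum]
    apply Subring.sum_mem
    intro i _
    rw [mul_smul_comm]
    apply R.zsmul_mem
    have hsplit : (∏ j, c j) = c i * ∏ j ∈ Finset.univ.erase i, c j :=
      (Finset.mul_prod_erase Finset.univ c (Finset.mem_univ i)).symm
    rw [hsplit, Int.cast_mul, mul_comm ((c i : ℤ) : 𝓞 K), mul_assoc, ← zsmul_eq_mul]
    exact R.zsmul_mem (h2 i) _

lemma conductor_ne_bot {R : Subring (𝓞 K)} (hord : IsOrder K R) :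
    conductorIdeal K R ≠ ⊥ := by
  obtain ⟨m, hm0, hm⟩ := exists_conductor_elt hord
  intro h
  rw [h, Ideal.mem_bot] at hm
  exact hm0 hm

lemma conductor_le {R : Subring (𝓞 K)} {x : 𝓞 K} (hx : x ∈ conductorIdeal K R) : x ∈ R := by
  simpa using (mem_conductorIdeal.mp hx) 1

set_option maxHeartbeats 1000000 in
set_option synthInstance.maxHeartbeats 400000 in
lemma exists_pow_sub_one_mem (I : Ideal (𝓞 K)) (hIbot : I ≠ ⊥) {x : 𝓞 K}
    (hcop : Ideal.span {x} ⊔ I = ⊤) : ∃ n : ℕ, 0 < n ∧ x ^ n - 1 ∈ I := by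
  classical
  haveI : Fintype (𝓞 K ⧸ I) := @Fintype.ofFinite _ (Ideal.finiteQuotientOfFreeOfNeBot I hIbot)
  have h1 : (1 : 𝓞 K) ∈ Ideal.span {x} ⊔ I := hcop ▸ Submodule.mem_top
  obtain ⟨a, ha, b, hb, hab⟩ := Submodule.mem_sup.mp h1
  obtain ⟨c, hc⟩ := Ideal.mem_span_singleton'.mp ha
  have hunit : IsUnit (Ideal.Quotient.mk I x) := by
    refine IsUnit.of_mul_eq_one (Ideal.Quotient.mk I c) ?_
    have h2 : Ideal.Quotient.mk I 1 = Ideal.Quotient.mk I a := by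
      rw [Ideal.Quotient.mk_eq_mk_iff_sub_mem]
      simpa [← hab] using hb
    rw [← map_mul, mul_comm x c, hc, ← h2, map_one]
  obtain ⟨u, hu⟩ := hunit
  refine ⟨orderOf u, orderOf_pos u, ?_⟩
  rw [← Ideal.Quotient.mk_eq_mk_iff_sub_mem, map_pow, ← hu, map_one,
    ← Units.val_pow_eq_pow_val, pow_orderOf_eq_one, Units.val_one]

lemma bImg_pos_of_coprime (hB : BoundaryMap K R B) (hR : IsHFD R)
    (hIbot : conductorIdeal K R ≠ ⊥) {x : 𝓞 K} (hx : x ≠ 0) (hxu : ¬IsUnit x)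
    (hcop : Ideal.span {x} ⊔ conductorIdeal K R = ⊤) : 0 < bImg B x := by
  classical
  obtain ⟨n, hnpos, hmem⟩ := exists_pow_sub_one_mem (conductorIdeal K R) hIbot hcop
  have hxnR : x ^ n ∈ R := by
    have := R.add_mem (conductor_le hmem) R.one_mem
    simpa using this
  have hxn0 : x ^ n ≠ 0 := pow_ne_zero _ hx
  have hxnu : ¬IsUnit (⟨x ^ n, hxnR⟩ : R) := by
    intro h
    have : IsUnit (x ^ n) := h.map R.subtype
    exact hxu (isUnit_of_dvd_unit (dvd_pow_self x hnpos.ne') this)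
  obtain ⟨f, hf, hprod⟩ := hR.1 ⟨x ^ n, hxnR⟩
    (fun h => hxn0 (by simpa using congrArg Subtype.val h)) hxnu
  have h2 := bImg_prod hB f hf
  rw [hprod] at h2
  have h3 : bImg B (x ^ n) = Multiset.card f := h2.2
  rw [bImg_pow hB hx n] at h3
  have hcard : 0 < Multiset.card f := by
    rcases Nat.eq_zero_or_pos (Multiset.card f) with h | h
    · exfalso
      rw [Multiset.card_eq_zero] at h
      rw [h, Multiset.prod_zero] at hprod
      exact hxnu (hprod ▸ isUnit_one)
    · exact h
  have hc' : (0:ℤ) < Multiset.card f := by exact_mod_cast hcard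
  have hn' : (0:ℤ) < n := by exact_mod_cast hnpos
  nlinarith [h3, hc', hn']

lemma bImg_nonneg (hB : BoundaryMap K R B) (hR : IsHFD R) (hord : IsOrder K R)
    {x : 𝓞 K} (hx : x ≠ 0) : 0 ≤ bImg B x := by
  obtain ⟨m, hm0, hm⟩ := exists_conductor_elt hord
  by_contra hneg
  push_neg at hneg
  have hx1 : bImg B x ≤ -1 := by omega
  set k := (bImg B m).natAbs + 1 with hk
  have hkx : x ^ k ≠ 0 := pow_ne_zero _ hx
  have hmem : m * x ^ k ∈ R := mem_conductorIdeal.mp hm _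
  have h1 : 0 ≤ bImg B (m * x ^ k) := bImg_nonneg_of_mem hB hR (mul_ne_zero hm0 hkx) hmem
  rw [bImg_mul hB hm0 hkx, bImg_pow hB hx] at h1
  have h2 : bImg B m + 1 ≤ (k : ℤ) := by
    rw [hk]
    push_cast [Int.natCast_natAbs]
    linarith [le_abs_self (bImg B m)]
  have hkpos : (0:ℤ) < (k : ℤ) := by positivity
  have h3 : (k:ℤ) * bImg B x ≤ (k:ℤ) * (-1) := mul_le_mul_of_nonneg_left hx1 hkpos.le
  linarith

lemma pow_card_le_prod (I : Ideal (𝓞 K)) (g : Multiset (Ideal (𝓞 K)))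
    (hg : ∀ Q ∈ g, I ≤ Q) : I ^ (Multiset.card g) ≤ g.prod := by
  induction g using Multiset.induction_on with
  | empty => simp
  | cons a s ih =>
      rw [Multiset.prod_cons, Multiset.card_cons, pow_succ, mul_comm]
      exact Ideal.mul_mono (hg a (Multiset.mem_cons_self a s))
        (ih fun Q hQ => hg Q (Multiset.mem_cons_of_mem hQ))

set_option maxHeartbeats 1000000 in
set_option synthInstance.maxHeartbeats 400000 in
lemma pow_conductor_le_span (hB : BoundaryMap K R B) (hR : IsHFD R) (hord : IsOrder K R)
    {π : 𝓞 K} (hπ : Irreducible π) (h0 : bImg B π = 0) :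
    (conductorIdeal K R) ^ (Fintype.card (ClassGroup (𝓞 K))) ≤ Ideal.span {π} := by
  classical
  set I := conductorIdeal K R with hIdef
  have hIbot : I ≠ ⊥ := conductor_ne_bot hord
  set hcl := Fintype.card (ClassGroup (𝓞 K)) with hcldef
  have hclpos : 0 < hcl := Fintype.card_pos
  set J := Ideal.span {π} with hJdef
  have hπ0 : π ≠ 0 := hπ.ne_zero
  have hJ0 : J ≠ 0 := by
    simpa [hJdef, Submodule.zero_eq_bot] using mt Ideal.span_singleton_eq_bot.mp hπ0
  set f := UniqueFactorizationMonoid.factors J with hfdef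
  have hprod : f.prod = J :=
    associated_iff_eq.mp (UniqueFactorizationMonoid.factors_prod hJ0)
  have hQprime : ∀ Q ∈ f, Prime Q := fun Q hQ => UniqueFactorizationMonoid.prime_of_factor Q hQ
  have hQ0 : ∀ Q ∈ f, Q ≠ (0 : Ideal (𝓞 K)) := fun Q hQ => (hQprime Q hQ).ne_zero
  have hQtop : ∀ Q ∈ f, Q ≠ (⊤ : Ideal (𝓞 K)) := by
    intro Q hQ h
    exact (hQprime Q hQ).2.1 (h ▸ Ideal.isUnit_iff.mpr rfl)
  -- every prime factor contains I
  have hQI : ∀ Q ∈ f, I ≤ Q := by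
    intro Q hQf
    by_contra hns
    have hQp : Q.IsPrime := Ideal.isPrime_of_prime (hQprime Q hQf)
    have hQbot : Q ≠ ⊥ := by simpa [Submodule.zero_eq_bot] using hQ0 Q hQf
    have hmax : Q.IsMaximal := Ideal.IsPrime.isMaximal hQp hQbot
    have hsup : Q ⊔ I = ⊤ := by
      rcases lt_or_eq_of_le (le_sup_left : Q ≤ Q ⊔ I) with hlt | heq
      · exact hmax.1.2 _ hlt
      · exact absurd (heq ▸ le_sup_right) hns
    have hQnzd : Q ∈ (Ideal (𝓞 K))⁰ := mem_nonZeroDivisors_of_ne_zero (hQ0 Q hQf)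
    have hpow1 : ClassGroup.mk0 ((⟨Q, hQnzd⟩ : (Ideal (𝓞 K))⁰) ^ hcl) = 1 := by
      rw [map_pow]
      exact pow_card_eq_one
    have epow : (⟨Q, hQnzd⟩ : (Ideal (𝓞 K))⁰) ^ hcl = ⟨Q ^ hcl, pow_mem hQnzd hcl⟩ := by
      ext
      simp
    rw [epow] at hpow1
    have hprin : (Q ^ hcl).IsPrincipal := (ClassGroup.mk0_eq_one_iff _).mp hpow1
    obtain ⟨ρ, hρ'⟩ := hprin
    have hρ'' : Q ^ hcl = Ideal.span {ρ} := hρ'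
    have hQpow0 : Q ^ hcl ≠ 0 := pow_ne_zero hcl (hQ0 Q hQf)
    have hρ0 : ρ ≠ 0 := by
      intro h
      rw [h] at hρ''
      apply hQpow0
      rw [hρ'', Submodule.zero_eq_bot, Ideal.span_singleton_eq_bot]
    have hρu : ¬IsUnit ρ := by
      intro hu
      have htop : Q ^ hcl = ⊤ := by rw [hρ'', Ideal.span_singleton_eq_top.mpr hu]
      have h1 : Q ^ hcl ≤ Q := Ideal.pow_le_self hclpos.ne'
      rw [htop] at h1
      exact hQp.ne_top (top_le_iff.mp h1)
    have hρcop : Ideal.span {ρ} ⊔ I = ⊤ := by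
      rw [← hρ'']
      exact ((Ideal.isCoprime_iff_sup_eq.mpr hsup).pow_left).sup_eq
    have hdvd : ρ ∣ π ^ hcl := by
      have hidvd : Ideal.span {ρ} ∣ Ideal.span {π ^ hcl} := by
        rw [← hρ'', ← Ideal.span_singleton_pow]
        have hQdvd : Q ∣ J := by rw [← hprod]; exact Multiset.dvd_prod hQf
        exact pow_dvd_pow_of_dvd hQdvd hcl
      exact Ideal.mem_span_singleton.mp
        (Ideal.le_of_dvd hidvd (Ideal.mem_span_singleton_self _))
    obtain ⟨τ, hτ⟩ := hdvd
    have hτ0 : τ ≠ 0 := by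
      intro h
      rw [h, mul_zero] at hτ
      exact pow_ne_zero hcl hπ0 hτ
    have hsum : bImg B ρ + bImg B τ = 0 := by
      rw [← bImg_mul hB hρ0 hτ0, ← hτ, bImg_pow hB hπ0, h0, mul_zero]
    have hρnn : 0 ≤ bImg B ρ := bImg_nonneg hB hR hord hρ0
    have hτnn : 0 ≤ bImg B τ := bImg_nonneg hB hR hord hτ0
    have hpos := bImg_pos_of_coprime hB hR hIbot hρ0 hρu hρcop
    omega
  -- bound the number of factors
  have hcard : Multiset.card f ≤ hcl := by
    by_contra hgt
    push_neg at hgt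
    set l := f.toList with hldef
    have hlen : l.length = Multiset.card f := Multiset.length_toList f
    have hlmem : ∀ Q ∈ l, Q ∈ f := fun Q hQ => (Multiset.mem_toList).mp hQ
    have hlprod : l.prod = J := by rw [Multiset.prod_toList, hprod]
    have hP0 : ∀ j : ℕ, (l.take j).prod ≠ (0 : Ideal (𝓞 K)) := by
      intro j h
      have hz := List.prod_eq_zero_iff.mp h
      exact hQ0 0 (hlmem 0 (List.take_subset j l hz)) rfl
    have hcards : Fintype.card (ClassGroup (𝓞 K)) < Fintype.card (Fin (Multiset.card f)) := by
      simpa using hgt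
    obtain ⟨j, k, hjk, heq⟩ := Fintype.exists_ne_map_eq_of_card_lt
      (fun j : Fin (Multiset.card f) =>
        ClassGroup.mk0 ⟨(l.take (j : ℕ)).prod, mem_nonZeroDivisors_of_ne_zero (hP0 j)⟩) hcards
    wlog hlt : (j : ℕ) < (k : ℕ) generalizing j k
    · exact this k j hjk.symm heq.symm (by omega)
    set s := (l.take (k : ℕ)).drop (j : ℕ) with hsdef
    have hkl : (k : ℕ) < l.length := by rw [hlen]; exact k.isLt
    have hseg : (l.take (j : ℕ)).prod * s.prod = (l.take (k : ℕ)).prod := by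
      have h1 : (l.take (k : ℕ)).take (j : ℕ) = l.take (j : ℕ) := by
        rw [List.take_take, min_eq_left hlt.le]
      calc (l.take (j : ℕ)).prod * s.prod
          = ((l.take (k : ℕ)).take (j : ℕ)).prod * ((l.take (k : ℕ)).drop (j : ℕ)).prod := by
            rw [h1]
        _ = (l.take (k : ℕ)).prod := List.prod_take_mul_prod_drop _ _
    have hsmem : ∀ Q ∈ s, Q ∈ f :=
      fun Q hQ => hlmem Q (List.take_subset (k : ℕ) l (List.drop_subset (j : ℕ) _ hQ))
    have hs0 : s.prod ≠ (0 : Ideal (𝓞 K)) := by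
      intro h
      exact hQ0 0 (hsmem 0 (List.prod_eq_zero_iff.mp h)) rfl
    have hsegcl : ClassGroup.mk0 ⟨s.prod, mem_nonZeroDivisors_of_ne_zero hs0⟩ = 1 := by
      have hmul : (⟨(l.take (j:ℕ)).prod, mem_nonZeroDivisors_of_ne_zero (hP0 j)⟩ :
          (Ideal (𝓞 K))⁰) * ⟨s.prod, mem_nonZeroDivisors_of_ne_zero hs0⟩ =
          ⟨(l.take (k:ℕ)).prod, mem_nonZeroDivisors_of_ne_zero (hP0 k)⟩ := Subtype.ext hseg
      have hcls := congrArg (ClassGroup.mk0 (R := 𝓞 K)) hmul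
      rw [map_mul, heq] at hcls
      have : ClassGroup.mk0 ⟨(l.take (k:ℕ)).prod, mem_nonZeroDivisors_of_ne_zero (hP0 k)⟩ *
          ClassGroup.mk0 ⟨s.prod, mem_nonZeroDivisors_of_ne_zero hs0⟩ =
          ClassGroup.mk0 ⟨(l.take (k:ℕ)).prod, mem_nonZeroDivisors_of_ne_zero (hP0 k)⟩ * 1 := by
        rw [mul_one]
        exact hcls
      exact mul_left_cancel this
    have hsprin : s.prod.IsPrincipal := (ClassGroup.mk0_eq_one_iff _).mp hsegcl
    obtain ⟨a, ha'⟩ := hsprin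
    have ha : s.prod = Ideal.span {a} := ha'
    -- a divides π
    have hsdvdJ : s.prod ∣ J := by
      have h1 : s.prod ∣ (l.take (k:ℕ)).prod := Dvd.intro_left _ hseg
      have h2 : (l.take (k:ℕ)).prod ∣ l.prod := by
        rw [← List.prod_take_mul_prod_drop l (k : ℕ)]
        exact Dvd.intro _ rfl
      rw [← hlprod]
      exact h1.trans h2
    have hadvd : a ∣ π := by
      have : Ideal.span {a} ∣ J := ha ▸ hsdvdJ
      exact Ideal.mem_span_singleton.mp
        (Ideal.le_of_dvd this (Ideal.mem_span_singleton_self _))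
    obtain ⟨b, hb⟩ := hadvd
    -- s is nonempty
    have hsne : s ≠ [] := by
      intro h
      have := congrArg List.length h
      rw [List.length_drop, List.length_take] at this
      simp only [List.length_nil] at this
      omega
    obtain ⟨Q, hQs⟩ := List.exists_mem_of_ne_nil s hsne
    have hstop : s.prod ≠ ⊤ := by
      intro h
      have h1 : s.prod ≤ Q := Ideal.le_of_dvd (List.dvd_prod hQs)
      rw [h] at h1
      exact hQtop Q (hsmem Q hQs) (top_le_iff.mp h1)
    have hau : ¬IsUnit a := fun hu => hstop (by rw [ha, Ideal.span_singleton_eq_top.mpr hu])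
    -- b is not a unit either
    have hbu : ¬IsUnit b := by
      intro hu
      have hJA : J = s.prod := by
        rw [hJdef, hb, ← Ideal.span_singleton_mul_span_singleton,
          Ideal.span_singleton_eq_top.mpr hu, Ideal.mul_top, ha]
      set dk := (l.drop (k : ℕ)).prod with hdkdef
      have hfull : s.prod * 1 = s.prod * ((l.take (j:ℕ)).prod * dk) := by
        rw [mul_one]
        calc s.prod = J := hJA.symm
          _ = l.prod := hlprod.symm
          _ = (l.take (k:ℕ)).prod * dk := (List.prod_take_mul_prod_drop l (k:ℕ)).symm
          _ = ((l.take (j:ℕ)).prod * s.prod) * dk := by rw [hseg]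
          _ = s.prod * ((l.take (j:ℕ)).prod * dk) := by ring
      have hone : (1 : Ideal (𝓞 K)) = (l.take (j:ℕ)).prod * dk := mul_left_cancel₀ hs0 hfull
      have hdku : IsUnit dk := isUnit_of_dvd_one (Dvd.intro_left _ hone.symm)
      have hdktop : dk = ⊤ := Ideal.isUnit_iff.mp hdku
      have hdkne : l.drop (k : ℕ) ≠ [] := by
        intro h
        have hlg := congrArg List.length h
        rw [List.length_drop] at hlg
        simp only [List.length_nil] at hlg
        omega
      obtain ⟨Q', hQ'⟩ := List.exists_mem_of_ne_nil _ hdkne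
      have h1 : dk ≤ Q' := Ideal.le_of_dvd (List.dvd_prod hQ')
      rw [hdktop] at h1
      exact hQtop Q' (hlmem Q' (List.drop_subset (k : ℕ) l hQ')) (top_le_iff.mp h1)
    rcases hπ.isUnit_or_isUnit hb with h | h
    · exact hau h
    · exact hbu h
  calc I ^ hcl ≤ I ^ (Multiset.card f) := Ideal.pow_le_pow_right hcard
    _ ≤ f.prod := pow_card_le_prod I f hQI
    _ = J := hprod

end BoundaryHelpers

set_option maxHeartbeats 1000000 in
set_option synthInstance.maxHeartbeats 400000 in
/-- In an HFD order `R ⊆ 𝓞 K` with conductor `I`: every irreducible `π` of `𝓞 K` with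
`π𝓞K` comaximal with `I` has positive boundary; consequently the set of boundary-0
irreducibles of `𝓞 K` is finite up to associates. -/
theorem stmt_8 (R : Subring (𝓞 K)) (hord : IsOrder K R) (hR : IsHFD R)
    (B : K → ℤ) (hB : BoundaryMap K R B) :
    (∀ π : 𝓞 K, Irreducible π → Ideal.span {π} ⊔ conductorIdeal K R = ⊤ →
        0 < B (algebraMap (𝓞 K) K π)) ∧
    ∃ S : Finset (𝓞 K), ∀ π : 𝓞 K, Irreducible π → B (algebraMap (𝓞 K) K π) = 0 →
        ∃ π' ∈ S, Associated π π' := by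
  classical
  constructor
  · intro π hπ hsup
    exact bImg_pos_of_coprime hB hR (conductor_ne_bot hord) hπ.ne_zero hπ.not_isUnit hsup
  · set I := conductorIdeal K R with hIdef
    set hcl := Fintype.card (ClassGroup (𝓞 K)) with hcldef
    have hIpow : I ^ hcl ≠ ⊥ := by
      have := conductor_ne_bot hord
      exact pow_ne_zero hcl (by simpa only [← Ideal.zero_eq_bot] using this)
    haveI hfinq : Finite (𝓞 K ⧸ (I ^ hcl)) :=
      Fintype.finite (@Fintype.ofFinite _ (Ideal.finiteQuotientOfFreeOfNeBot _ hIpow))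
    haveI : Finite (Ideal (𝓞 K ⧸ (I ^ hcl))) :=
      Finite.of_injective (fun J : Ideal (𝓞 K ⧸ (I ^ hcl)) => (J : Set (𝓞 K ⧸ (I ^ hcl)))) SetLike.coe_injective
    have hker : Ideal.comap (Ideal.Quotient.mk (I ^ hcl)) ⊥ = I ^ hcl := Ideal.mk_ker
    have hfinsub : Finite {p : Ideal (𝓞 K) // Ideal.comap (Ideal.Quotient.mk (I ^ hcl)) ⊥ ≤ p} :=
      Finite.of_equiv _ (Ideal.relIsoOfSurjective (Ideal.Quotient.mk (I ^ hcl))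
        Ideal.Quotient.mk_surjective).toEquiv
    rw [hker] at hfinsub
    have hsetfin : {J : Ideal (𝓞 K) | I ^ hcl ≤ J}.Finite := Set.finite_coe_iff.mp hfinsub
    have hTfin : {J : Ideal (𝓞 K) | ∃ π : 𝓞 K, Irreducible π ∧
        B (algebraMap (𝓞 K) K π) = 0 ∧ J = Ideal.span {π}}.Finite := by
      apply hsetfin.subset
      rintro J ⟨π, hπ, h0, rfl⟩
      exact pow_conductor_le_span hB hR hord hπ h0
    refine ⟨hTfin.toFinset.attach.image
      (fun x => ((hTfin.mem_toFinset).mp x.2).choose), ?_⟩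
    intro π hπ h0
    have hmem : Ideal.span {π} ∈ {J : Ideal (𝓞 K) | ∃ π : 𝓞 K, Irreducible π ∧
        B (algebraMap (𝓞 K) K π) = 0 ∧ J = Ideal.span {π}} := ⟨π, hπ, h0, rfl⟩
    have hmem' : Ideal.span {π} ∈ hTfin.toFinset := hTfin.mem_toFinset.mpr hmem
    have hspec := ((hTfin.mem_toFinset).mp hmem').choose_spec
    refine ⟨((hTfin.mem_toFinset).mp hmem').choose,
      Finset.mem_image.mpr ⟨⟨_, hmem'⟩, Finset.mem_attach _ _, rfl⟩, ?_⟩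
    exact Ideal.span_singleton_eq_span_singleton.mp hspec.2.2
end

section
/- Let R be an HFD order in a ring of algebraic integers D, let ω ∈ D be a prime element of D with ∂_R(ω) = 0, and say d ∈ D partially conducts ω if there exists z ∈ D with ∂_R(z) = 0 and dzω ∈ R. Then the set of partial conductors of ω is not contained in any single maximal ideal of D. -/
open NumberField

set_option synthInstance.maxHeartbeats 1000000
set_option maxHeartbeats 1000000
open scoped nonZeroDivisors

variable (K : Type*) [Field K] [NumberField K]

section Aux

variable {K} {R : Subring (𝓞 K)} {B : K → ℤ}

private lemma aux_coe_ne_zero {x : ↥R} (h : x ≠ 0) : (x : 𝓞 K) ≠ 0 :=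
  fun hh => h (by exact_mod_cast hh)

private lemma aux_b1 (hB : BoundaryMap K R B) : B (algebraMap (𝓞 K) K 1) = 0 := by
  have h := hB.1 1 1 one_ne_zero one_ne_zero
  rw [mul_one] at h
  rw [map_one]
  linarith

private lemma aux_mul (hB : BoundaryMap K R B) {x y : 𝓞 K} (hx : x ≠ 0) (hy : y ≠ 0) :
    B (algebraMap (𝓞 K) K (x * y)) =
      B (algebraMap (𝓞 K) K x) + B (algebraMap (𝓞 K) K y) := by
  rw [map_mul]
  exact hB.1 _ _ (RingOfIntegers.coe_ne_zero_iff.2 hx) (RingOfIntegers.coe_ne_zero_iff.2 hy)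

private lemma aux_pow (hB : BoundaryMap K R B) {x : 𝓞 K} (hx : x ≠ 0) (n : ℕ) :
    B (algebraMap (𝓞 K) K (x ^ n)) = n * B (algebraMap (𝓞 K) K x) := by
  induction n with
  | zero => simpa using aux_b1 hB
  | succ n ih =>
    rw [pow_succ, aux_mul hB (pow_ne_zero _ hx) hx, ih]
    push_cast
    ring

private lemma aux_prod (hB : BoundaryMap K R B) (f : Multiset ↥R) :
    (∀ τ ∈ f, Irreducible τ) →
      f.prod ≠ 0 ∧ B (algebraMap (𝓞 K) K (f.prod : 𝓞 K)) = Multiset.card f := by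
  induction f using Multiset.induction_on with
  | empty =>
    intro _
    refine ⟨one_ne_zero, ?_⟩
    simpa using aux_b1 hB
  | cons a t ih =>
    intro hall
    have ha : Irreducible a := hall a (Multiset.mem_cons_self _ _)
    obtain ⟨ht0, htB⟩ := ih (fun τ hτ => hall τ (Multiset.mem_cons_of_mem hτ))
    have ha0 : a ≠ 0 := ha.ne_zero
    constructor
    · rw [Multiset.prod_cons]; exact mul_ne_zero ha0 ht0
    · rw [Multiset.prod_cons]
      have hcoe : ((a * t.prod : ↥R) : 𝓞 K) = (a : 𝓞 K) * ((t.prod : ↥R) : 𝓞 K) := rfl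
      rw [hcoe, aux_mul hB (aux_coe_ne_zero ha0) (aux_coe_ne_zero ht0), hB.2.2 a ha, htB,
        Multiset.card_cons]
      push_cast
      ring

private lemma aux_nonneg_mem (hB : BoundaryMap K R B) (hR : IsHFD R) (r : ↥R) (hr : r ≠ 0) :
    0 ≤ B (algebraMap (𝓞 K) K (r : 𝓞 K)) := by
  by_cases hu : IsUnit r
  · rw [hB.2.1 r hu]
  · obtain ⟨f, hf, hfp⟩ := hR.1 r hr hu
    have h := (aux_prod hB f hf).2
    rw [hfp] at h
    rw [h]
    positivity

private lemma aux_conductor (hord : IsOrder K R) :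
    ∃ c : 𝓞 K, c ≠ 0 ∧ ∀ x : 𝓞 K, c * x ∈ R := by
  choose m hm0 hmem using hord
  obtain ⟨s, hs⟩ := IsNoetherian.noetherian (⊤ : Submodule ℤ (𝓞 K))
  refine ⟨((∏ g ∈ s, m g : ℤ) : 𝓞 K), ?_, ?_⟩
  · exact_mod_cast Finset.prod_ne_zero_iff.2 fun g _ => hm0 g
  · intro x
    let T : Submodule ℤ (𝓞 K) :=
      { carrier := {x | ((∏ g ∈ s, m g : ℤ) : 𝓞 K) * x ∈ R}
        add_mem' := fun ha hb => by
          simpa [mul_add] using R.add_mem ha hb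
        zero_mem' := by simpa using R.zero_mem
        smul_mem' := fun z a ha => by
          have : ((∏ g ∈ s, m g : ℤ) : 𝓞 K) * (z • a)
              = z • (((∏ g ∈ s, m g : ℤ) : 𝓞 K) * a) := mul_smul_comm _ _ _
          simp only [Set.mem_setOf_eq, this]
          exact zsmul_mem ha z }
    have hT : (⊤ : Submodule ℤ (𝓞 K)) ≤ T := by
      rw [← hs]
      refine Submodule.span_le.2 ?_
      intro g hg
      classical
      show ((∏ g ∈ s, m g : ℤ) : 𝓞 K) * g ∈ R
      rw [← Finset.mul_prod_erase s m hg, Int.cast_mul]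
      rw [show ((m g : 𝓞 K)) * ((∏ x ∈ s.erase g, m x : ℤ) : 𝓞 K) * g
            = ((∏ x ∈ s.erase g, m x : ℤ) : 𝓞 K) * ((m g : 𝓞 K) * g) by ring]
      exact R.mul_mem (intCast_mem R _) (hmem g)
    exact hT Submodule.mem_top

private lemma aux_nonneg_all (hB : BoundaryMap K R B) (hR : IsHFD R) (hord : IsOrder K R)
    {x : 𝓞 K} (hx : x ≠ 0) : 0 ≤ B (algebraMap (𝓞 K) K x) := by
  by_contra hneg
  push_neg at hneg
  obtain ⟨c, hc0, hc⟩ := aux_conductor hord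
  have hcR : c ∈ R := by have := hc 1; rwa [mul_one] at this
  have hn : 0 ≤ B (algebraMap (𝓞 K) K c) :=
    aux_nonneg_mem hB hR ⟨c, hcR⟩ (fun hh => hc0 (congrArg Subtype.val hh))
  set n := B (algebraMap (𝓞 K) K c) with hndef
  set k : ℕ := n.toNat + 1 with hkdef
  have hr0 : c * x ^ k ≠ 0 := mul_ne_zero hc0 (pow_ne_zero _ hx)
  have h0 : 0 ≤ B (algebraMap (𝓞 K) K (c * x ^ k)) :=
    aux_nonneg_mem hB hR ⟨c * x ^ k, hc _⟩ (fun hh => hr0 (congrArg Subtype.val hh))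
  rw [aux_mul hB hc0 (pow_ne_zero _ hx), aux_pow hB hx] at h0
  have hk : (k : ℤ) = n + 1 := by
    rw [hkdef]; push_cast; rw [Int.toNat_of_nonneg hn]
  rw [hk] at h0
  nlinarith

private lemma aux_extract (hB : BoundaryMap K R B) (hR : IsHFD R) {ω : 𝓞 K} (hω : Prime ω)
    (hb : B (algebraMap (𝓞 K) K ω) = 0) {M : Ideal (𝓞 K)}
    (hSM : ∀ d : 𝓞 K,
      (∃ z : 𝓞 K, z ≠ 0 ∧ B (algebraMap (𝓞 K) K z) = 0 ∧ d * z * ω ∈ R) → d ∈ M)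
    (x : ↥R) (hx0 : (x : 𝓞 K) ≠ 0) (hxd : ω ∣ (x : 𝓞 K)) :
    ∃ (π : ↥R) (w y : 𝓞 K) (s : ℕ), Irreducible π ∧ (x : 𝓞 K) = (π : 𝓞 K) * w ∧
      (π : 𝓞 K) = ω ^ s * y ∧ ¬ ω ∣ y ∧ 1 ≤ s ∧ y ≠ 0 ∧ y ∈ M := by
  classical
  have hnu : ¬IsUnit x := by
    intro hu
    exact hω.not_unit (isUnit_of_dvd_unit hxd (hu.map (Subring.subtype R)))
  have hx0' : x ≠ 0 := fun h => hx0 (by rw [h]; rfl)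
  obtain ⟨f, hfirr, hfp⟩ := hR.1 x hx0' hnu
  have hxprod : (x : 𝓞 K) = ((f.map (Subring.subtype R)).prod) := by
    rw [← hfp]; exact (map_multiset_prod (Subring.subtype R) f)
  obtain ⟨a, haf, had⟩ := hω.exists_mem_multiset_dvd (hxprod ▸ hxd)
  obtain ⟨π, hπf, rfl⟩ := Multiset.mem_map.1 haf
  have hπirr : Irreducible π := hfirr π hπf
  have hπ0 : ((π : ↥R) : 𝓞 K) ≠ 0 := aux_coe_ne_zero hπirr.ne_zero
  obtain ⟨s, y, hynd, hπeq⟩ := WfDvdMonoid.max_power_factor hπ0 hω.irreducible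
  have hs : 1 ≤ s := by
    rcases Nat.eq_zero_or_pos s with h | h
    · exfalso
      subst h
      rw [pow_zero, one_mul] at hπeq
      exact hynd (hπeq ▸ had)
    · exact h
  have hy0 : y ≠ 0 := fun hh => hπ0 (by rw [hπeq, hh, mul_zero])
  have hyM : y ∈ M := by
    apply hSM y
    refine ⟨ω ^ (s - 1), pow_ne_zero _ hω.ne_zero, ?_, ?_⟩
    · rw [aux_pow hB hω.ne_zero, hb, mul_zero]
    · have hyy : y * ω ^ (s - 1) * ω = (π : 𝓞 K) := by
        rw [hπeq, mul_assoc, ← pow_succ, Nat.sub_add_cancel hs]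
        ring
      rw [hyy]
      exact π.2
  refine ⟨π, ((f.erase π).prod : 𝓞 K), y, s, hπirr, ?_, hπeq, hynd, hs, hy0, hyM⟩
  have h1 : π * (f.erase π).prod = x := by
    rw [← hfp, ← Multiset.prod_cons, Multiset.cons_erase hπf]
  calc (x : 𝓞 K) = ((π * (f.erase π).prod : ↥R) : 𝓞 K) := by rw [h1]
    _ = (π : 𝓞 K) * ((f.erase π).prod : 𝓞 K) := rfl

private lemma aux_bound {ω : 𝓞 K} {M : Ideal (𝓞 K)} (hMp : Prime M)
    (hωp : Prime (Ideal.span {ω})) (L : ℕ) (g : Multiset (𝓞 K))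
    (hg : ∀ a ∈ g, emultiplicity M (Ideal.span {a}) ≤ (L : ℕ∞) ∧ (a ∈ M → ω ∣ a)) :
    emultiplicity M (Ideal.span {g.prod}) ≤
      (L : ℕ∞) * emultiplicity (Ideal.span {ω}) (Ideal.span {g.prod}) := by
  induction g using Multiset.induction_on with
  | empty =>
    have h1 : emultiplicity M (Ideal.span ({(1 : 𝓞 K)} : Set (𝓞 K))) = 0 := by
      rw [emultiplicity_eq_zero, Ideal.span_singleton_one, ← Ideal.one_eq_top]
      exact hMp.not_dvd_one
    rw [Multiset.prod_zero, h1]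
    exact zero_le
  | cons a g ih =>
    have hsplit : Ideal.span {(a ::ₘ g).prod} = Ideal.span {a} * Ideal.span {g.prod} := by
      rw [Multiset.prod_cons, Ideal.span_singleton_mul_span_singleton]
    rw [hsplit, emultiplicity_mul hMp, emultiplicity_mul hωp, mul_add]
    have hpoint : emultiplicity M (Ideal.span {a}) ≤
        (L : ℕ∞) * emultiplicity (Ideal.span {ω}) (Ideal.span {a}) := by
      obtain ⟨h1, h2⟩ := hg a (Multiset.mem_cons_self _ _)
      by_cases hmem : a ∈ M
      · have hωdvd : Ideal.span {ω} ∣ Ideal.span {a} :=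
          Ideal.dvd_span_singleton.2 (Ideal.mem_span_singleton.2 (h2 hmem))
        have hone : (1 : ℕ∞) ≤ emultiplicity (Ideal.span {ω}) (Ideal.span {a}) :=
          ENat.one_le_iff_ne_zero.2 (emultiplicity_pos_of_dvd hωdvd).ne'
        calc emultiplicity M (Ideal.span {a}) ≤ (L : ℕ∞) := h1
          _ = (L : ℕ∞) * 1 := (mul_one _).symm
          _ ≤ _ := mul_le_mul_right hone _
      · have hz : emultiplicity M (Ideal.span {a}) = 0 :=
          emultiplicity_eq_zero.2 fun hd => hmem (Ideal.dvd_span_singleton.1 hd)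
        rw [hz]
        exact zero_le
    exact add_le_add hpoint (ih fun b hb => hg b (Multiset.mem_cons_of_mem hb))

end Aux

/-- If `ω ∈ 𝓞 K` is a prime of boundary 0 over the HFD order `R`, then the set of
elements partially conducting `ω` to `R` is not contained in a single maximal ideal. -/
theorem stmt_10 (R : Subring (𝓞 K)) (hord : IsOrder K R) (hR : IsHFD R)
    (B : K → ℤ) (hB : BoundaryMap K R B)
    (ω : 𝓞 K) (hω : Prime ω) (hb : B (algebraMap (𝓞 K) K ω) = 0) :
    ¬∃ M : Ideal (𝓞 K), M.IsMaximal ∧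
      ∀ d : 𝓞 K, (∃ z : 𝓞 K, z ≠ 0 ∧ B (algebraMap (𝓞 K) K z) = 0 ∧ d * z * ω ∈ R) →
        d ∈ M := by
  rintro ⟨M, hMmax, hM⟩
  obtain ⟨c, hc0, hc⟩ := aux_conductor hord
  have hcR : c ∈ R := by have := hc 1; rwa [mul_one] at this
  have hcM : c ∈ M := hM c ⟨1, one_ne_zero, aux_b1 hB, by rw [mul_one]; exact hc ω⟩
  have hx₀0 : ((⟨c * ω, hc ω⟩ : ↥R) : 𝓞 K) ≠ 0 := mul_ne_zero hc0 hω.ne_zero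
  obtain ⟨π₀, w₀, y, s₀, hπ₀irr, hx₀fact, hπ₀eq, hynd, hs₀, hy0, hyM⟩ :=
    aux_extract hB hR hω hb hM (⟨c * ω, hc ω⟩ : ↥R) hx₀0 (dvd_mul_left ω c)
  have hsω_prime_ideal : (Ideal.span {ω}).IsPrime := (Ideal.span_singleton_prime hω.ne_zero).2 hω
  have hsω_ne_bot : Ideal.span {ω} ≠ (⊥ : Ideal (𝓞 K)) := by
    simpa [Ideal.span_singleton_eq_bot] using hω.ne_zero
  have hsω_max : (Ideal.span {ω}).IsMaximal :=
    Ideal.IsPrime.isMaximal hsω_prime_ideal hsω_ne_bot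
  by_cases hωM : ω ∈ M
  · have hMeq : Ideal.span {ω} = M :=
      hsω_max.eq_of_le hMmax.ne_top ((Ideal.span_singleton_le_iff_mem M).2 hωM)
    rw [← hMeq] at hyM
    exact hynd (Ideal.mem_span_singleton.1 hyM)
  · have hMne_bot : M ≠ ⊥ := fun h => hc0 (Ideal.mem_bot.1 (h ▸ hcM))
    have hA2 : ∀ x : ↥R, ω ∣ (x : 𝓞 K) → (x : 𝓞 K) ∈ M := by
      intro x hdvd
      by_contra hxM
      have hx0 : (x : 𝓞 K) ≠ 0 := fun h => hxM (h ▸ M.zero_mem)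
      obtain ⟨π, w, y', s, hπirr, hfact, hπeq, hnd, hs, hy'0, hy'M⟩ :=
        aux_extract hB hR hω hb hM x hx0 hdvd
      exact hxM (by
        rw [hfact, hπeq]
        exact Ideal.mul_mem_right _ _ (Ideal.mul_mem_left _ _ hy'M))
    haveI hint : Algebra.IsIntegral ↥R (𝓞 K) :=
      ⟨fun x => IsIntegral.tower_top (RingOfIntegers.isIntegral x)⟩
    have hNQ : ∀ x : 𝓞 K, x ∈ R → x ∈ M → ω ∣ x := by
      have hcomap : (Ideal.span {ω}).comap (algebraMap ↥R (𝓞 K)) ≤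
          M.comap (algebraMap ↥R (𝓞 K)) := by
        intro t ht
        have h1 : ω ∣ (t : 𝓞 K) := Ideal.mem_span_singleton.1 ht
        exact hA2 t h1
      haveI : (M.comap (algebraMap ↥R (𝓞 K))).IsPrime :=
        Ideal.IsPrime.comap _ (hK := hMmax.isPrime)
      obtain ⟨Q', hQ'ge, hQ'prime, hQ'comap⟩ :=
        Ideal.exists_ideal_over_prime_of_isIntegral (M.comap (algebraMap ↥R (𝓞 K)))
          (Ideal.span {ω}) hcomap
      have hQ'eq : Ideal.span {ω} = Q' := hsω_max.eq_of_le hQ'prime.ne_top hQ'ge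
      intro x hxR hxM
      have h2 : (⟨x, hxR⟩ : ↥R) ∈ M.comap (algebraMap ↥R (𝓞 K)) := hxM
      rw [← hQ'comap] at h2
      have h3 : x ∈ Q' := h2
      rw [← hQ'eq] at h3
      exact Ideal.mem_span_singleton.1 h3
    have hMprime : Prime M := Ideal.prime_of_isPrime hMne_bot hMmax.isPrime
    have hωp : Prime (Ideal.span {ω} : Ideal (𝓞 K)) :=
      Ideal.prime_of_isPrime hsω_ne_bot hsω_prime_ideal
    set h := Fintype.card (ClassGroup (𝓞 K)) with hhdef
    have hh : 0 < h := Fintype.card_pos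
    have hM0 : M ∈ (Ideal (𝓞 K))⁰ :=
      mem_nonZeroDivisors_of_ne_zero (by simpa [Ideal.zero_eq_bot] using hMne_bot)
    have hprinc : (M ^ h).IsPrincipal := by
      have he : (⟨M ^ h, pow_mem hM0 h⟩ : (Ideal (𝓞 K))⁰) = (⟨M, hM0⟩ : (Ideal (𝓞 K))⁰) ^ h := by
        ext; simp
      have h1 : ClassGroup.mk0 (⟨M ^ h, pow_mem hM0 h⟩ : (Ideal (𝓞 K))⁰) = 1 := by
        rw [he, map_pow, hhdef, pow_card_eq_one]
      exact (ClassGroup.mk0_eq_one_iff _).1 h1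
    obtain ⟨μ, hμ⟩ := hprinc.principal
    have hμ0 : μ ≠ 0 := by
      intro h0
      apply hMne_bot
      apply (pow_eq_zero_iff hh.ne').1
      rw [Ideal.zero_eq_bot, hμ, h0]
      exact Ideal.span_singleton_eq_bot.2 rfl
    have hspanc0 : Ideal.span {c} ≠ (0 : Ideal (𝓞 K)) := by
      simpa [Ideal.zero_eq_bot, Ideal.span_singleton_eq_bot] using hc0
    have hfin : FiniteMultiplicity (Ideal.span {ω} : Ideal (𝓞 K)) (Ideal.span {c}) :=
      FiniteMultiplicity.of_not_isUnit
        (fun hu => hω.not_isUnit (Ideal.span_singleton_eq_top.1 (Ideal.isUnit_iff.1 hu))) hspanc0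
    have key : ∀ t : ℕ, ∃ τ : ↥R, Irreducible τ ∧ μ ^ t ∣ (τ : 𝓞 K) := by
      intro t
      set F : ℕ := multiplicity (Ideal.span {ω} : Ideal (𝓞 K)) (Ideal.span {c}) with hFdef
      set k : ℕ := h * t * F + 1 with hkdef
      have hyk0 : y ^ k ≠ 0 := pow_ne_zero _ hy0
      have hr0 : c * y ^ k ≠ 0 := mul_ne_zero hc0 hyk0
      have hrM : c * y ^ k ∈ M := Ideal.mul_mem_right _ _ hcM
      have hrnu : ¬IsUnit (⟨c * y ^ k, hc _⟩ : ↥R) := by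
        intro hu
        exact hMmax.ne_top (M.eq_top_of_isUnit_mem hrM (hu.map (Subring.subtype R)))
      obtain ⟨f, hfirr, hfp⟩ := hR.1 _ (fun hh => hr0 (congrArg Subtype.val hh)) hrnu
      have hprodeq : ((f.map (Subring.subtype R)).prod) = c * y ^ k := by
        rw [← map_multiset_prod, hfp]
        rfl
      have hex : ∃ τ ∈ f, ((h * t : ℕ) : ℕ∞) < emultiplicity M (Ideal.span {(τ : 𝓞 K)}) := by
        by_contra hno
        push_neg at hno
        have hball : ∀ a ∈ f.map (Subring.subtype R),
            emultiplicity M (Ideal.span {a}) ≤ ((h * t : ℕ) : ℕ∞) ∧ (a ∈ M → ω ∣ a) := by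
          intro a ha
          obtain ⟨τ, hτf, rfl⟩ := Multiset.mem_map.1 ha
          exact ⟨hno τ hτf, fun hm => hNQ _ τ.2 hm⟩
        have hbd := aux_bound hMprime hωp (h * t) _ hball
        rw [hprodeq] at hbd
        have hspanr : Ideal.span {c * y ^ k} = Ideal.span {c} * (Ideal.span {y}) ^ k := by
          rw [Ideal.span_singleton_pow, Ideal.span_singleton_mul_span_singleton]
        have hvMr : (k : ℕ∞) ≤ emultiplicity M (Ideal.span {c * y ^ k}) := by
          rw [hspanr, emultiplicity_mul hMprime, emultiplicity_pow hMprime]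
          have h1 : (1 : ℕ∞) ≤ emultiplicity M (Ideal.span {y}) :=
            ENat.one_le_iff_ne_zero.2
              (emultiplicity_pos_of_dvd (Ideal.dvd_span_singleton.2 hyM)).ne'
          calc (k : ℕ∞) = (k : ℕ∞) * 1 := (mul_one _).symm
            _ ≤ (k : ℕ∞) * emultiplicity M (Ideal.span {y}) := mul_le_mul_right h1 _
            _ ≤ _ := le_add_self
        have hvωr : emultiplicity (Ideal.span {ω} : Ideal (𝓞 K)) (Ideal.span {c * y ^ k})
            = (F : ℕ∞) := by
          rw [hspanr, emultiplicity_mul hωp, emultiplicity_pow hωp]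
          have hy' : emultiplicity (Ideal.span {ω} : Ideal (𝓞 K)) (Ideal.span {y}) = 0 :=
            emultiplicity_eq_zero.2 fun hd =>
              hynd (Ideal.mem_span_singleton.1 (Ideal.dvd_span_singleton.1 hd))
          rw [hy', mul_zero, add_zero, hfin.emultiplicity_eq_multiplicity, hFdef]
        rw [hvωr] at hbd
        have hfinal : (k : ℕ∞) ≤ ((h * t * F : ℕ) : ℕ∞) := by
          push_cast
          exact hvMr.trans hbd
        have hcon : k ≤ h * t * F := by exact_mod_cast hfinal
        omega
      obtain ⟨τ, hτf, hτv⟩ := hex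
      refine ⟨τ, hfirr τ hτf, ?_⟩
      have hdvd1 : M ^ (h * t) ∣ Ideal.span {(τ : 𝓞 K)} := pow_dvd_of_le_emultiplicity hτv.le
      have hdvd2 : Ideal.span {μ ^ t} ∣ Ideal.span {(τ : 𝓞 K)} := by
        rw [← Ideal.span_singleton_pow,
          show (Ideal.span {μ} : Ideal (𝓞 K)) = M ^ h from hμ.symm, ← pow_mul]
        exact hdvd1
      exact Ideal.mem_span_singleton.1 (Ideal.dvd_span_singleton.1 hdvd2)
    have hnc : 0 ≤ B (algebraMap (𝓞 K) K c) :=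
      aux_nonneg_mem hB hR ⟨c, hcR⟩ (fun hh => hc0 (congrArg Subtype.val hh))
    have hβμ0 : 0 ≤ B (algebraMap (𝓞 K) K μ) := aux_nonneg_all hB hR hord hμ0
    have hβμle : B (algebraMap (𝓞 K) K μ) ≤ 0 := by
      by_contra hpos
      push_neg at hpos
      have h1le : (1 : ℤ) ≤ B (algebraMap (𝓞 K) K μ) := by
        have := Int.add_one_le_iff.2 hpos
        simpa using this
      set t : ℕ := (B (algebraMap (𝓞 K) K c)).toNat + 2 with htdef
      obtain ⟨τ, hτirr, hτdvd⟩ := key t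
      obtain ⟨xt, hxt⟩ := hτdvd
      have hτ0 : (τ : 𝓞 K) ≠ 0 := aux_coe_ne_zero hτirr.ne_zero
      have hxt0 : xt ≠ 0 := by rintro rfl; rw [mul_zero] at hxt; exact hτ0 hxt
      have hβτ : B (algebraMap (𝓞 K) K (τ : 𝓞 K)) = 1 := hB.2.2 τ hτirr
      rw [hxt, aux_mul hB (pow_ne_zero _ hμ0) hxt0, aux_pow hB hμ0] at hβτ
      have h0 : 0 ≤ B (algebraMap (𝓞 K) K (c * xt)) :=
        aux_nonneg_mem hB hR ⟨c * xt, hc _⟩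
          (fun hh => (mul_ne_zero hc0 hxt0) (congrArg Subtype.val hh))
      rw [aux_mul hB hc0 hxt0] at h0
      have ht : (t : ℤ) = B (algebraMap (𝓞 K) K c) + 2 := by
        rw [htdef]; push_cast; rw [Int.toNat_of_nonneg hnc]
      have hge : (t : ℤ) * 1 ≤ (t : ℤ) * B (algebraMap (𝓞 K) K μ) :=
        mul_le_mul_of_nonneg_left h1le (by positivity)
      linarith
    have hβμ : B (algebraMap (𝓞 K) K μ) = 0 := le_antisymm hβμle hβμ0
    obtain ⟨b, J, hJ, hcs⟩ := WfDvdMonoid.max_power_factor hspanc0 hMprime.irreducible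
    have hEq : Ideal.span {(c * ω) ^ h} =
        Ideal.span {μ ^ b * ω} * (J ^ h * (Ideal.span {ω} : Ideal (𝓞 K)) ^ (h - 1)) := by
      rw [← Ideal.span_singleton_pow, ← Ideal.span_singleton_mul_span_singleton,
        ← Ideal.span_singleton_mul_span_singleton, ← Ideal.span_singleton_pow, hcs,
        show (Ideal.span {μ} : Ideal (𝓞 K)) = M ^ h from hμ.symm]
      rw [mul_pow, mul_pow, ← pow_mul, ← pow_mul, Nat.mul_comm b h]
      rw [show (Ideal.span {ω} : Ideal (𝓞 K)) ^ h
          = Ideal.span {ω} * Ideal.span {ω} ^ (h - 1) by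
        conv_lhs => rw [show h = (h - 1) + 1 from (Nat.succ_pred_eq_of_pos hh).symm]
        rw [pow_succ]
        ring]
      ring
    have hdvd : μ ^ b * ω ∣ (c * ω) ^ h := by
      have hdvd' : Ideal.span {μ ^ b * ω} ∣ Ideal.span {(c * ω) ^ h} := ⟨_, hEq⟩
      exact Ideal.mem_span_singleton.1 (Ideal.dvd_span_singleton.1 hdvd')
    obtain ⟨d, hd⟩ := hdvd
    have hdM : d ∈ M := by
      apply hM d
      refine ⟨μ ^ b, pow_ne_zero _ hμ0, ?_, ?_⟩
      · rw [aux_pow hB hμ0, hβμ, mul_zero]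
      · have hdd : d * μ ^ b * ω = (c * ω) ^ h := by rw [hd]; ring
        rw [hdd]
        exact pow_mem (hc ω) h
    have hμbω0 : Ideal.span {μ ^ b * ω} ≠ (0 : Ideal (𝓞 K)) := by
      simpa [Ideal.zero_eq_bot, Ideal.span_singleton_eq_bot] using
        mul_ne_zero (pow_ne_zero b hμ0) hω.ne_zero
    have hspan_d : Ideal.span {d} = J ^ h * (Ideal.span {ω} : Ideal (𝓞 K)) ^ (h - 1) := by
      apply mul_left_cancel₀ hμbω0
      rw [← hEq, Ideal.span_singleton_mul_span_singleton, ← hd]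
    have hMdvd : M ∣ Ideal.span {d} := Ideal.dvd_span_singleton.2 hdM
    rw [hspan_d] at hMdvd
    rcases hMprime.dvd_mul.1 hMdvd with hcase | hcase
    · exact hJ (hMprime.dvd_of_dvd_pow hcase)
    · exact hωM (Ideal.dvd_span_singleton.1 (hMprime.dvd_of_dvd_pow hcase))
end

section
/- Let R be an integral domain with integral closure R̄ such that R̄ = R·U(R̄) (every element of R̄ is a unit of R̄ times an element of R). If I and J are distinct ideals of R̄, then I ∩ R ≠ J ∩ R. -/
lemma stmt_17_aux (R K : Type*) [CommRing R] [IsDomain R] [Field K] [Algebra R K]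
    [IsFractionRing R K]
    (hU : ∀ x : integralClosure R K, ∃ (u : (integralClosure R K)ˣ) (r : R),
      ((↑(u * x) : integralClosure R K) : K) = algebraMap R K r)
    (I J : Ideal (integralClosure R K))
    (h : I.comap (algebraMap R (integralClosure R K)) =
      J.comap (algebraMap R (integralClosure R K))) : I ≤ J := by
  intro x hx
  obtain ⟨u, r, hr⟩ := hU x
  have hux : (u : integralClosure R K) * x = algebraMap R (integralClosure R K) r := by
    apply Subtype.ext
    rw [hr]
    exact (IsScalarTower.algebraMap_apply R (integralClosure R K) K r)
  have hrI : r ∈ I.comap (algebraMap R (integralClosure R K)) := by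
    simp only [Ideal.mem_comap, ← hux]
    exact I.mul_mem_left _ hx
  rw [h, Ideal.mem_comap, ← hux] at hrI
  have := J.mul_mem_left ((u⁻¹ : (integralClosure R K)ˣ) : integralClosure R K) hrI
  rwa [← mul_assoc, Units.inv_mul, one_mul] at this

/-- If `R` is a domain whose integral closure `R̄` (in its quotient field) satisfies
`R̄ = R·U(R̄)`, then contracting to `R` is injective on ideals of `R̄`. -/
theorem stmt_17 (R K : Type*) [CommRing R] [IsDomain R] [Field K] [Algebra R K]
    [IsFractionRing R K]
    (hU : ∀ x : integralClosure R K, ∃ (u : (integralClosure R K)ˣ) (r : R),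
      ((↑(u * x) : integralClosure R K) : K) = algebraMap R K r)
    (I J : Ideal (integralClosure R K)) (hIJ : I ≠ J) :
    I.comap (algebraMap R (integralClosure R K)) ≠
      J.comap (algebraMap R (integralClosure R K)) := by
  intro h
  exact hIJ (le_antisymm (stmt_17_aux R K hU I J h) (stmt_17_aux R K hU J I h.symm))
end

section
/- Let R be an order with integral closure R̄ and conductor I = (R : R̄), and suppose R̄ = R·U(R̄). Write I = P₁^{e₁}⋯P_k^{e_k} as a product of powers of distinct prime ideals of R̄, and set Qᵢ = Pᵢ^{eᵢ} ∩ R. Then the Qᵢ are pairwise comaximal ideals of R, R/I ≅ R/Q₁ × ⋯ × R/Q_k, and moreover for any intermediate ring R ⊆ T ⊆ R̄: if x ∈ R̄ satisfies x ≡ rᵢ mod Pᵢ^{eᵢ} with rᵢ ∈ T for all i, then x ∈ T. -/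
open NumberField

variable (K : Type*) [Field K] [NumberField K]

lemma aux_prod_eq_inf {A : Type*} [CommRing A] {ι : Type*} [DecidableEq ι]
    (f : ι → Ideal A) (s : Finset ι)
    (h : ∀ i ∈ s, ∀ j ∈ s, i ≠ j → IsCoprime (f i) (f j)) :
    ∏ i ∈ s, f i = s.inf f := by
  induction s using Finset.induction_on with
  | empty => simp
  | @insert a s ha ih =>
    have hcop : IsCoprime (f a) (∏ i ∈ s, f i) :=
      IsCoprime.prod_right fun j hj =>
        h a (Finset.mem_insert_self a s) j (Finset.mem_insert_of_mem hj)
          (fun hh => ha (hh ▸ hj))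
    rw [Finset.prod_insert ha, Ideal.mul_eq_inf_of_coprime hcop.sup_eq,
      ih (fun i hi j hj hij =>
        h i (Finset.mem_insert_of_mem hi) j (Finset.mem_insert_of_mem hj) hij),
      Finset.inf_insert]

set_option maxHeartbeats 1000000 in
set_option synthInstance.maxHeartbeats 200000 in
/-- CRT for an order `R` with `R̄ = R·U(R̄)`: writing the conductor as
`I = P₁^{e₁}⋯P_k^{e_k}` with distinct primes `Pᵢ` of `𝓞 K` and `Qᵢ = Pᵢ^{eᵢ} ∩ R`,
the `Qᵢ` are pairwise comaximal, `R/I ≅ ∏ R/Qᵢ`, and an element of `𝓞 K` congruent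
modulo each `Pᵢ^{eᵢ}` to an element of an intermediate ring `T` lies in `T`. -/
theorem stmt_18 (R : Subring (𝓞 K)) (hord : IsOrder K R)
    (hU : ∀ x : 𝓞 K, ∃ u : (𝓞 K)ˣ, (u : 𝓞 K) * x ∈ R)
    (k : ℕ) (P : Fin k → Ideal (𝓞 K)) (e : Fin k → ℕ)
    (hPprime : ∀ i, (P i).IsPrime) (hPdist : Function.Injective P)
    (he : ∀ i, 0 < e i)
    (hfac : conductorIdeal K R = ∏ i, P i ^ e i)
    (Q : Fin k → Ideal R) (hQ : ∀ i, Q i = (P i ^ e i).comap R.subtype) :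
    (∀ i j, i ≠ j → Q i ⊔ Q j = ⊤) ∧
    Nonempty ((R ⧸ (conductorIdeal K R).comap R.subtype) ≃+* ∀ i, R ⧸ Q i) ∧
    (∀ T : Subring (𝓞 K), R ≤ T →
      ∀ x : 𝓞 K, (∀ i, ∃ r ∈ T, x - r ∈ P i ^ e i) → x ∈ T) := by
  classical
  -- the conductor is contained in `R`
  have hIR : ∀ y ∈ conductorIdeal K R, y ∈ R := fun y hy => by simpa using hy 1
  -- the conductor is nonzero
  have hInb : conductorIdeal K R ≠ ⊥ := by
    obtain ⟨s, hs⟩ := Module.Finite.fg_top (R := ℤ) (M := 𝓞 K)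
    choose m hm0 hmR using fun b : 𝓞 K => hord b
    set M : ℤ := ∏ b ∈ s, m b with hMdef
    have hM0 : M ≠ 0 := Finset.prod_ne_zero_iff.mpr fun b _ => hm0 b
    have key : ∀ d : 𝓞 K, (M : 𝓞 K) * d ∈ R := by
      let S : Submodule ℤ (𝓞 K) :=
        { carrier := {d | (M : 𝓞 K) * d ∈ R}
          add_mem' := fun {a b} ha hb => by simpa [mul_add] using R.add_mem ha hb
          zero_mem' := by simpa using R.zero_mem
          smul_mem' := fun c x hx => by
            show (M : 𝓞 K) * (c • x) ∈ R
            rw [zsmul_eq_mul, mul_left_comm]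
            exact R.mul_mem (intCast_mem R c) hx }
      have hsS : ↑s ⊆ (S : Set (𝓞 K)) := by
        intro b hb
        show (M : 𝓞 K) * b ∈ R
        have hM : M = (∏ c ∈ s.erase b, m c) * m b := (Finset.prod_erase_mul _ _ hb).symm
        rw [hM]
        rw [Int.cast_mul, mul_assoc]
        exact R.mul_mem (intCast_mem R _) (hmR b)
      have hS : S = ⊤ := top_unique (hs ▸ Submodule.span_le.mpr hsS)
      intro d
      have hd : d ∈ S := hS ▸ Submodule.mem_top
      exact hd
    intro hbot
    have hM : (M : 𝓞 K) ∈ conductorIdeal K R := key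
    rw [hbot, Ideal.mem_bot] at hM
    exact hM0 (by exact_mod_cast hM)
  -- the primes are nonzero, hence maximal
  have hPnb : ∀ i, P i ≠ ⊥ := by
    intro i h
    apply hInb
    rw [hfac, ← Ideal.zero_eq_bot]
    exact Finset.prod_eq_zero (Finset.mem_univ i)
      (by rw [h, Ideal.zero_eq_bot.symm, zero_pow (he i).ne'])
  have hPmax : ∀ i, (P i).IsMaximal := fun i => (hPprime i).isMaximal (hPnb i)
  have hcop : Pairwise fun i j => IsCoprime (P i ^ e i) (P j ^ e j) := by
    intro i j hij
    exact (Ideal.isCoprime_iff_sup_eq.mpr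
      ((hPmax i).coprime_of_ne (hPmax j) (fun h => hij (hPdist h)))).pow
  have hprodinf : ∏ i, P i ^ e i = ⨅ i, P i ^ e i := by
    rw [aux_prod_eq_inf (fun i => P i ^ e i) Finset.univ
      (fun i _ j _ hij => hcop hij), Finset.inf_eq_iInf]
    simp
  have hmemI : ∀ x : 𝓞 K, (∀ i, x ∈ P i ^ e i) → x ∈ conductorIdeal K R := by
    intro x hx
    rw [hfac, hprodinf]
    exact Submodule.mem_iInf _ |>.mpr hx
  -- key construction: idempotent-like elements of `R`
  have hG : ∀ i, ∃ g : 𝓞 K, g ∈ R ∧ g ∈ P i ^ e i ∧ ∀ j, j ≠ i → g - 1 ∈ P j ^ e j := by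
    intro i
    obtain ⟨z, hz⟩ := Ideal.exists_forall_sub_mem_ideal hcop
      (fun l => if l = i then 0 else 1)
    have hzi : z ∈ P i ^ e i := by simpa using hz i
    have hzj : ∀ j, j ≠ i → z - 1 ∈ P j ^ e j := fun j hj => by simpa [hj] using hz j
    obtain ⟨u, hu⟩ := hU z
    haveI := Ideal.finiteQuotientOfFreeOfNeBot (conductorIdeal K R) hInb
    haveI : Finite ((𝓞 K) ⧸ conductorIdeal K R) := this
    haveI : Finite ((𝓞 K) ⧸ conductorIdeal K R)ˣ := inferInstance
    set v : ((𝓞 K) ⧸ conductorIdeal K R)ˣ :=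
      Units.map (Ideal.Quotient.mk (conductorIdeal K R)).toMonoidHom u with hvdef
    have hn : 0 < orderOf v := orderOf_pos v
    set n := orderOf v with hndef
    have hv : v ^ n = 1 := pow_orderOf_eq_one v
    have hun : ((u : 𝓞 K)) ^ n - 1 ∈ conductorIdeal K R := by
      have h1 : Ideal.Quotient.mk (conductorIdeal K R) ((u : 𝓞 K) ^ n) = 1 := by
        have h2 := congrArg (Units.val) hv
        simpa [hvdef, map_pow] using h2
      rwa [← map_one (Ideal.Quotient.mk (conductorIdeal K R)),
        Ideal.Quotient.mk_eq_mk_iff_sub_mem] at h1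
    refine ⟨z ^ n, ?_, Ideal.pow_mem_of_mem _ hzi n hn, ?_⟩
    · have h1 : ((u : 𝓞 K) * z) ^ n ∈ R := R.pow_mem hu n
      have h2 : ((u : 𝓞 K) ^ n - 1) * z ^ n ∈ R :=
        hIR _ ((conductorIdeal K R).mul_mem_right _ hun)
      have h3 : z ^ n = ((u : 𝓞 K) * z) ^ n - ((u : 𝓞 K) ^ n - 1) * z ^ n := by ring
      rw [h3]
      exact R.sub_mem h1 h2
    · intro j hj
      have h1 : Ideal.Quotient.mk (P j ^ e j) z = 1 := by
        rw [← map_one (Ideal.Quotient.mk (P j ^ e j)), Ideal.Quotient.mk_eq_mk_iff_sub_mem]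
        exact hzj j hj
      have h2 : Ideal.Quotient.mk (P j ^ e j) (z ^ n) = 1 := by
        rw [map_pow, h1, one_pow]
      rwa [← map_one (Ideal.Quotient.mk (P j ^ e j)),
        Ideal.Quotient.mk_eq_mk_iff_sub_mem] at h2
  -- part 1 : pairwise comaximal
  have part1 : ∀ i j, i ≠ j → Q i ⊔ Q j = ⊤ := by
    intro i j hij
    obtain ⟨g, hgR, hgi, hgj⟩ := hG i
    rw [Ideal.eq_top_iff_one]
    have h1 : (⟨g, hgR⟩ : R) ∈ Q i := by
      rw [hQ]
      exact hgi
    have h2 : ((1 : R) - ⟨g, hgR⟩) ∈ Q j := by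
      rw [hQ]
      show ((1 : R) - (⟨g, hgR⟩ : R) : R).1 ∈ P j ^ e j
      have : ((1 : R) - (⟨g, hgR⟩ : R) : R).1 = -(g - 1) := by
        push_cast
        ring
      rw [this]
      exact neg_mem (hgj j (Ne.symm hij))
    have h3 := Submodule.add_mem_sup h1 h2
    simpa using h3
  refine ⟨part1, ⟨?_⟩, ?_⟩
  · -- part 2 : CRT isomorphism
    have hQinf : (conductorIdeal K R).comap R.subtype = ⨅ i, Q i := by
      ext x
      have hx : x.1 ∈ conductorIdeal K R ↔ ∀ i, x.1 ∈ P i ^ e i := by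
        rw [hfac, hprodinf]
        exact Submodule.mem_iInf _
      simp only [Ideal.mem_comap, Submodule.mem_iInf, hQ]
      exact hx
    refine (Ideal.quotEquivOfEq hQinf).trans
      (Ideal.quotientInfRingEquivPiQuotient Q ?_)
    intro i j hij
    exact Ideal.isCoprime_iff_sup_eq.mpr (part1 i j hij)
  · -- part 3 : gluing into an intermediate ring
    intro T hRT x hx
    choose r hrT hrP using hx
    choose g hgR hgP hgO using hG
    set f : Fin k → 𝓞 K := fun i => 1 - g i with hfdef
    have hfR : ∀ i, f i ∈ R := fun i => R.sub_mem R.one_mem (hgR i)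
    have hfP : ∀ i l, i ≠ l → f i ∈ P l ^ e l := by
      intro i l hil
      have : f i = -(g i - 1) := by rw [hfdef]; ring
      rw [this]
      exact neg_mem (hgO i l (Ne.symm hil))
    set S : 𝓞 K := ∑ i, f i with hSdef
    have e1 : (∑ i, f i * (x - r i)) + (∑ i, f i * r i) = S * x := by
      rw [← Finset.sum_add_distrib, hSdef, Finset.sum_mul]
      exact Finset.sum_congr rfl fun i _ => by ring
    have key : x = ((∑ i, f i * (x - r i)) + (∑ i, f i * r i)) + (1 - S) * x := by
      rw [e1]
      ring
    have hA : (∑ i, f i * (x - r i)) ∈ T := by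
      refine sum_mem fun i _ => hRT (hIR _ (hmemI _ fun l => ?_))
      by_cases hil : i = l
      · subst hil
        exact Ideal.mul_mem_left _ _ (hrP i)
      · exact Ideal.mul_mem_right _ _ (hfP i l hil)
    have hB : (∑ i, f i * r i) ∈ T :=
      sum_mem fun i _ => T.mul_mem (hRT (hfR i)) (hrT i)
    have hC : (1 - S) * x ∈ T := by
      refine hRT (hIR _ ?_)
      refine Ideal.mul_mem_right _ _ (hmemI _ fun l => ?_)
      have h4 : (1 : 𝓞 K) - S = g l - ∑ i ∈ Finset.univ.erase l, f i := by
        rw [hSdef, ← Finset.add_sum_erase _ f (Finset.mem_univ l), hfdef]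
        ring
      rw [h4]
      refine sub_mem (hgP l) (Ideal.sum_mem _ fun i hi => ?_)
      exact hfP i l (Finset.ne_of_mem_erase hi)
    rw [key]
    exact T.add_mem (T.add_mem hA hB) hC
end
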